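/- arXiv:1211.2778 — 7 statements merged into one kernel-verified Lean document; each statement's English description precedes it below -/
import Mathlib

section
/- For all real numbers x, y with 0 < x ≤ 1 and 0 < y ≤ 1, one has x(log x − log y) − (x − y) ≥ g(y)(x − y)², where g(y) = (y − 1 − log y)/(y − 1)² for y ≠ 1 (with g(1) = 1/2 by continuity). -/
/-!
Put `t = y / x`. Since `g t * (t - 1)² = t - 1 - log t`, the left-hand side equals
`x * g t * (t - 1)²` while the right-hand side is `x² * g y * (t - 1)²`, so the inequality
reduces to `y * g y ≤ t * g t` for `y ≤ t`. The function `u ↦ u * g u` is increasing on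
`(0, 1)`, is at most `1/2` on `(0, 1]` and at least `1/2` on `[1, ∞)`.
-/

/-- The function `g(y) = (y - 1 - log y)/(y - 1)²`, extended by continuity to `g(1) = 1/2`. -/
noncomputable def g (y : ℝ) : ℝ := if y = 1 then 1/2 else (y - 1 - Real.log y) / (y - 1)^2

open Real Set

lemma monotoneOn_of_hasDerivAt_nonneg_of_isOpen {D : Set ℝ} (hD : Convex ℝ D) (hDo : IsOpen D)
    {f f' : ℝ → ℝ} (hf : ∀ x ∈ D, HasDerivAt f (f' x) x) (hf' : ∀ x ∈ D, 0 ≤ f' x) :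
    MonotoneOn f D :=
  monotoneOn_of_hasDerivWithinAt_nonneg hD (fun x hx ↦ (hf x hx).continuousAt.continuousWithinAt)
    (by rw [hDo.interior_eq]; exact fun x hx ↦ (hf x hx).hasDerivWithinAt)
    (by rwa [hDo.interior_eq])

lemma antitoneOn_of_hasDerivAt_nonpos_of_isOpen {D : Set ℝ} (hD : Convex ℝ D) (hDo : IsOpen D)
    {f f' : ℝ → ℝ} (hf : ∀ x ∈ D, HasDerivAt f (f' x) x) (hf' : ∀ x ∈ D, f' x ≤ 0) :
    AntitoneOn f D :=
  antitoneOn_of_hasDerivWithinAt_nonpos hD (fun x hx ↦ (hf x hx).continuousAt.continuousWithinAt)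
    (by rw [hDo.interior_eq]; exact fun x hx ↦ (hf x hx).hasDerivWithinAt)
    (by rwa [hDo.interior_eq])

lemma antitoneOn_two_mul_log_sub_add_inv :
    AntitoneOn (fun u : ℝ ↦ 2 * log u - u + u⁻¹) (Ioi 0) := by
  refine antitoneOn_of_hasDerivAt_nonpos_of_isOpen (convex_Ioi 0) isOpen_Ioi
    (f' := fun u ↦ 2 * u⁻¹ - 1 - (u ^ 2)⁻¹) (fun u hu ↦ ?_) (fun u hu ↦ ?_)
  · have hu0 : u ≠ 0 := (mem_Ioi.1 hu).ne'
    exact (((hasDerivAt_log hu0).const_mul 2).sub (hasDerivAt_id' u)).add (hasDerivAt_inv hu0)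
      |>.congr_deriv (by ring)
  · have hu0 : u ≠ 0 := (mem_Ioi.1 hu).ne'
    have hsq : 2 * u⁻¹ - 1 - (u ^ 2)⁻¹ = -(u⁻¹ - 1) ^ 2 := by field_simp; ring
    simpa only [hsq, neg_nonpos] using sq_nonneg (u⁻¹ - 1)

lemma sq_sub_one_le_two_mul_mul_log {u : ℝ} (hu0 : 0 < u) (hu1 : u ≤ 1) :
    u ^ 2 - 1 ≤ 2 * u * log u := by
  have h := antitoneOn_two_mul_log_sub_add_inv (mem_Ioi.2 hu0) (mem_Ioi.2 one_pos) hu1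
  simp only [log_one, inv_one] at h
  have := mul_le_mul_of_nonneg_left h hu0.le
  field_simp at this
  nlinarith

lemma two_mul_mul_log_le_sq_sub_one {u : ℝ} (hu : 1 ≤ u) : 2 * u * log u ≤ u ^ 2 - 1 := by
  have hu0 : 0 < u := one_pos.trans_le hu
  have h := antitoneOn_two_mul_log_sub_add_inv (mem_Ioi.2 one_pos) (mem_Ioi.2 hu0) hu
  simp only [log_one, inv_one] at h
  have := mul_le_mul_of_nonneg_left h hu0.le
  field_simp at this
  nlinarith

lemma antitoneOn_two_mul_sub_add_one_mul_log :
    AntitoneOn (fun u : ℝ ↦ 2 * u - (u + 1) * log u) (Ioi 0) := by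
  refine antitoneOn_of_hasDerivAt_nonpos_of_isOpen (convex_Ioi 0) isOpen_Ioi
    (f' := fun u ↦ 1 - u⁻¹ - log u) (fun u hu ↦ ?_) (fun u hu ↦ ?_)
  · have hu0 : u ≠ 0 := (mem_Ioi.1 hu).ne'
    exact (((hasDerivAt_id' u).const_mul 2).sub
      (((hasDerivAt_id' u).add_const 1).mul (hasDerivAt_log hu0))).congr_deriv
      (by field_simp; ring)
  · linarith [one_sub_inv_le_log_of_pos (mem_Ioi.1 hu)]

lemma add_one_mul_log_le_two_mul_sub_one {u : ℝ} (hu0 : 0 < u) (hu1 : u ≤ 1) :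
    (u + 1) * log u ≤ 2 * (u - 1) := by
  have h := antitoneOn_two_mul_sub_add_one_mul_log (mem_Ioi.2 hu0) (mem_Ioi.2 one_pos) hu1
  simp only [log_one] at h
  linarith

lemma g_mul_sq_sub_one (t : ℝ) : g t * (t - 1) ^ 2 = t - 1 - log t := by
  by_cases ht : t = 1
  · simp [ht]
  · rw [g, if_neg ht]
    exact div_mul_cancel₀ _ (pow_ne_zero 2 (sub_ne_zero.2 ht))

lemma mul_g_le_half {u : ℝ} (hu0 : 0 < u) (hu1 : u ≤ 1) : u * g u ≤ 1 / 2 := by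
  rcases hu1.eq_or_lt with rfl | hu1
  · simp [g]
  · rw [g, if_neg hu1.ne, mul_div_assoc', div_le_iff₀ (by nlinarith)]
    nlinarith [sq_sub_one_le_two_mul_mul_log hu0 hu1.le]

lemma half_le_mul_g {u : ℝ} (hu : 1 ≤ u) : 1 / 2 ≤ u * g u := by
  rcases hu.eq_or_lt with rfl | hu1
  · simp [g]
  · rw [g, if_neg hu1.ne', mul_div_assoc', le_div_iff₀ (by nlinarith)]
    nlinarith [two_mul_mul_log_le_sq_sub_one hu]

lemma monotoneOn_mul_g : MonotoneOn (fun u ↦ u * g u) (Ioo 0 1) := by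
  have hformula :
      EqOn (fun u ↦ u * (u - 1 - log u) / (u - 1) ^ 2) (fun u ↦ u * g u) (Ioo 0 1) :=
    fun u hu ↦ by simp only [g, if_neg hu.2.ne, mul_div_assoc]
  refine MonotoneOn.congr ?_ hformula
  refine monotoneOn_of_hasDerivAt_nonneg_of_isOpen (convex_Ioo 0 1) isOpen_Ioo
    (f' := fun u ↦ ((u + 1) * log u - 2 * (u - 1)) / (u - 1) ^ 3)
    (fun u hu ↦ ?_) (fun u hu ↦ ?_)
  · have hu0 : u ≠ 0 := hu.1.ne'
    have hu1 : u - 1 ≠ 0 := sub_ne_zero.2 hu.2.ne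
    have hnum : HasDerivAt (fun u ↦ u * (u - 1 - log u)) (2 * u - 2 - log u) u :=
      ((hasDerivAt_id' u).mul (((hasDerivAt_id' u).sub_const 1).fun_sub (hasDerivAt_log hu0)))
        |>.congr_deriv (by field_simp; ring)
    have hden : HasDerivAt (fun u ↦ (u - 1) ^ 2) (2 * (u - 1)) u :=
      ((hasDerivAt_id' u).sub_const 1).fun_pow 2 |>.congr_deriv (by simp)
    exact (hnum.div hden (pow_ne_zero 2 hu1)).congr_deriv (by field_simp; ring)
  · exact div_nonneg_of_nonpos (by linarith [add_one_mul_log_le_two_mul_sub_one hu.1 hu.2.le])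
      (Odd.pow_nonpos (by decide) (by linarith [hu.2]))

lemma mul_g_le_mul_g {y t : ℝ} (hy0 : 0 < y) (hy1 : y ≤ 1) (hyt : y ≤ t) :
    y * g y ≤ t * g t := by
  rcases le_or_gt 1 t with ht | ht
  · exact (mul_g_le_half hy0 hy1).trans (half_le_mul_g ht)
  · exact monotoneOn_mul_g ⟨hy0, hyt.trans_lt ht⟩ ⟨hy0.trans_le hyt, ht⟩ hyt

theorem stmt0 (x y : ℝ) (hx0 : 0 < x) (hx1 : x ≤ 1) (hy0 : 0 < y) (hy1 : y ≤ 1) :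
    x * (Real.log x - Real.log y) - (x - y) ≥ g y * (x - y)^2 := by
  set t := y / x
  have ht0 : 0 < t := div_pos hy0 hx0
  have hy : y = t * x := (div_mul_cancel₀ y hx0.ne').symm
  have hyt : y ≤ t := hy ▸ mul_le_of_le_one_right ht0.le hx1
  have hgt : x * g y ≤ g t := by
    refine le_of_mul_le_mul_left ?_ ht0
    calc t * (x * g y) = y * g y := by rw [hy]; ring
      _ ≤ t * g t := mul_g_le_mul_g hy0 hy1 hyt
  calc g y * (x - y) ^ 2 = (x * g y) * (x * (t - 1) ^ 2) := by rw [hy]; ring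
    _ ≤ g t * (x * (t - 1) ^ 2) := by gcongr
    _ = x * (t - 1 - log t) := by rw [← g_mul_sq_sub_one]; ring
    _ = x * (log x - log y) - (x - y) := by rw [hy, log_mul ht0.ne' hx0.ne']; ring
end

section
/- Let A and B be trace class self-adjoint operators on a separable Hilbert space with 0 ≤ A ≤ 1 and 0 ≤ B ≤ 1 − ε for some ε ∈ (0,1). Then Tr[A(log A − log B)] ≥ C_ε Tr[(A − B)²] + Tr(A − B), where C_ε = g(1 − ε) with g(y) = (y − 1 − log y)/(y − 1)² and the convention 0 log 0 = 0. -/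
open Real intervalIntegral

noncomputable def logTaylorKernel (x y : ℝ) : ℝ :=
  ∫ s in (0:ℝ)..1, (1 - s) / (y + s * (x - y))

theorem add_mul_sub_pos {x y s : ℝ} (hx : 0 < x) (hy : 0 < y) (hs : s ∈ Set.Icc (0:ℝ) 1) :
    0 < y + s * (x - y) := by
  nlinarith [mul_nonneg hs.1 hx.le, mul_nonneg (sub_nonneg.2 hs.2) hy.le]

theorem intervalIntegrable_logTaylorKernel {x y : ℝ} (hx : 0 < x) (hy : 0 < y) :
    IntervalIntegrable (fun s => (1 - s) / (y + s * (x - y))) MeasureTheory.volume 0 1 :=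
  ContinuousOn.intervalIntegrable <| (by fun_prop : ContinuousOn (fun s : ℝ => 1 - s) _).div
    (by fun_prop) fun s hs =>
      (add_mul_sub_pos hx hy (by rwa [Set.uIcc_of_le zero_le_one] at hs)).ne'

theorem sq_mul_logTaylorKernel {x y : ℝ} (hx : 0 < x) (hy : 0 < y) :
    (x - y) ^ 2 * logTaylorKernel x y = x * (log x - log y) - (x - y) := by
  have hderiv : ∀ s ∈ Set.uIcc (0:ℝ) 1,
      HasDerivAt (fun s => x * log (y + s * (x - y)) - (x - y) * s)
        ((x - y) ^ 2 * ((1 - s) / (y + s * (x - y)))) s := by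
    intro s hs
    have hpos := add_mul_sub_pos hx hy (by rwa [Set.uIcc_of_le zero_le_one] at hs)
    have hline : HasDerivAt (fun s : ℝ => y + s * (x - y)) (x - y) s := by
      simpa using ((hasDerivAt_id s).mul_const (x - y)).const_add y
    refine (((hline.log hpos.ne').const_mul x).sub
      ((hasDerivAt_id' s).const_mul (x - y))).congr_deriv ?_
    rw [mul_div_assoc', mul_div_assoc', sub_eq_iff_eq_add, div_add' _ _ _ hpos.ne',
      div_left_inj' hpos.ne']
    ring
  rw [logTaylorKernel, ← integral_const_mul, integral_eq_sub_of_hasDerivAt hderiv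
    ((intervalIntegrable_logTaylorKernel hx hy).const_mul _)]
  simp only [one_mul, zero_mul, add_zero, mul_zero, sub_zero, add_sub_cancel]
  ring

theorem logTaylorKernel_anti {x y x' y' : ℝ} (hx : 0 < x) (hy : 0 < y) (hxx' : x ≤ x')
    (hyy' : y ≤ y') : logTaylorKernel x' y' ≤ logTaylorKernel x y :=
  integral_mono_on zero_le_one
    (intervalIntegrable_logTaylorKernel (hx.trans_le hxx') (hy.trans_le hyy'))
    (intervalIntegrable_logTaylorKernel hx hy) fun s hs =>
      div_le_div_of_nonneg_left (sub_nonneg.2 hs.2) (add_mul_sub_pos hx hy hs) (by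
        nlinarith [mul_le_mul_of_nonneg_left hxx' hs.1,
          mul_le_mul_of_nonneg_left hyy' (sub_nonneg.2 hs.2)])

theorem g_eq_logTaylorKernel {Y : ℝ} (hY : 0 < Y) : g Y = logTaylorKernel 1 Y := by
  rcases eq_or_ne Y 1 with rfl | hY1
  · simp only [logTaylorKernel, sub_self, mul_zero, add_zero, div_one]
    rw [integral_comp_sub_left (fun s => s)]
    norm_num [g]
  · have hne : (Y - 1) ^ 2 ≠ 0 := pow_ne_zero 2 (sub_ne_zero.2 hY1)
    have h := sq_mul_logTaylorKernel one_pos hY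
    rw [g, if_neg hY1, div_eq_iff hne]
    rw [log_one] at h
    linear_combination -h

theorem g_nonneg {Y : ℝ} (hY : 0 < Y) : 0 ≤ g Y := by
  unfold g
  split_ifs
  · norm_num
  · exact div_nonneg (by linarith [log_le_sub_one_of_pos hY]) (sq_nonneg _)

theorem g_mul_self_le_one {Y : ℝ} (hY : 0 < Y) : g Y * Y ≤ 1 := by
  unfold g
  split_ifs with hY1
  · norm_num [hY1]
  · have hsub : Y - 1 ≠ 0 := sub_ne_zero.2 hY1
    have hlog := mul_le_mul_of_nonneg_left (one_sub_inv_le_log_of_pos hY) hY.le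
    rw [div_mul_eq_mul_div, div_le_one (by positivity)]
    nlinarith [mul_inv_cancel₀ hY.ne']

theorem g_mul_sq_add_sub_le {Y x y : ℝ} (hY : 0 < Y) (hx0 : 0 ≤ x) (hx1 : x ≤ 1) (hy : 0 < y)
    (hyY : y ≤ Y) : g Y * (x - y) ^ 2 + (x - y) ≤ x * (log x - log y) := by
  rcases hx0.eq_or_lt with rfl | hx
  · have : g Y * y ≤ 1 :=
      (mul_le_mul_of_nonneg_left hyY (g_nonneg hY)).trans (g_mul_self_le_one hY)
    nlinarith
  · have hK := logTaylorKernel_anti hx hy hx1 hyY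
    rw [← g_eq_logTaylorKernel hY] at hK
    linear_combination
      sq_mul_logTaylorKernel hx hy + mul_le_mul_of_nonneg_left hK (sq_nonneg (x - y))

theorem g_mul_tsum_add_tsum_le {ι : Type*} (w x y : ι → ℝ) {Y : ℝ} (hw : ∀ i, 0 ≤ w i)
    (hY : 0 < Y) (hx : ∀ i, x i ∈ Set.Icc 0 1) (hy : ∀ i, y i ∈ Set.Ioc 0 Y)
    (h1 : Summable fun i => w i * (x i * (log (x i) - log (y i))))
    (h2 : Summable fun i => w i * (x i - y i) ^ 2)
    (h3 : Summable fun i => w i * (x i - y i)) :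
    g Y * ∑' i, w i * (x i - y i) ^ 2 + ∑' i, w i * (x i - y i)
      ≤ ∑' i, w i * (x i * (log (x i) - log (y i))) := by
  rw [← tsum_mul_left, ← (h2.mul_left _).tsum_add h3]
  refine ((h2.mul_left _).add h3).tsum_le_tsum (fun i => ?_) h1
  linear_combination mul_le_mul_of_nonneg_left
    (g_mul_sq_add_sub_le hY (hx i).1 (hx i).2 (hy i).1 (hy i).2) (hw i)

theorem stmt2_general {H : Type*} [NormedAddCommGroup H] [InnerProductSpace ℂ H]
    (u v : ℕ → H)
    (a b : ℕ → ℝ) (ε : ℝ) (hε : ε ∈ Set.Ioo (0:ℝ) 1)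
    (ha : ∀ i, a i ∈ Set.Icc (0:ℝ) 1) (hb : ∀ j, b j ∈ Set.Ioc (0:ℝ) (1 - ε))
    (hS1 : Summable (fun p : ℕ × ℕ =>
      ‖(inner ℂ (u p.1) (v p.2) : ℂ)‖^2 * (a p.1 * (Real.log (a p.1) - Real.log (b p.2)))))
    (hS2 : Summable (fun p : ℕ × ℕ =>
      ‖(inner ℂ (u p.1) (v p.2) : ℂ)‖^2 * (a p.1 - b p.2)^2))
    (hS3 : Summable (fun p : ℕ × ℕ =>
      ‖(inner ℂ (u p.1) (v p.2) : ℂ)‖^2 * (a p.1 - b p.2))) :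
    ∑' p : ℕ × ℕ, ‖(inner ℂ (u p.1) (v p.2) : ℂ)‖^2 * (a p.1 * (Real.log (a p.1) - Real.log (b p.2)))
      ≥ g (1 - ε) * ∑' p : ℕ × ℕ, ‖(inner ℂ (u p.1) (v p.2) : ℂ)‖^2 * (a p.1 - b p.2)^2
        + ∑' p : ℕ × ℕ, ‖(inner ℂ (u p.1) (v p.2) : ℂ)‖^2 * (a p.1 - b p.2) :=
  g_mul_tsum_add_tsum_le (fun p : ℕ × ℕ => ‖(inner ℂ (u p.1) (v p.2) : ℂ)‖ ^ 2) (fun p => a p.1)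
    (fun p => b p.2) (fun _ => sq_nonneg _) (sub_pos.2 hε.2) (fun p => ha p.1) (fun p => hb p.2)
    hS1 hS2 hS3

/-- Relative entropy inequality (Klein's inequality form).  The trace-class self-adjoint
operators `A`, `B` on a separable Hilbert space are represented through their spectral
decompositions: `A = ∑ᵢ aᵢ |uᵢ⟩⟨uᵢ|`, `B = ∑ⱼ bⱼ |vⱼ⟩⟨vⱼ|` with orthonormal bases `u`, `v`
and summable (trace-class) eigenvalue sequences `a`, `b`, with `0 ≤ A ≤ 1`,
`0 ≤ B ≤ 1 - ε`.  Then
`Tr[A (log A - log B)] ≥ g(1-ε) Tr[(A-B)²] + Tr(A-B)`,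
all traces being computed via the joint spectral decomposition. -/
theorem stmt2 {H : Type*} [NormedAddCommGroup H] [InnerProductSpace ℂ H] [CompleteSpace H]
    (u v : ℕ → H) (hu : Orthonormal ℂ u) (hv : Orthonormal ℂ v)
    (hu_total : (Submodule.span ℂ (Set.range u)).topologicalClosure = ⊤)
    (hv_total : (Submodule.span ℂ (Set.range v)).topologicalClosure = ⊤)
    (a b : ℕ → ℝ) (ε : ℝ) (hε : ε ∈ Set.Ioo (0:ℝ) 1)
    (ha : ∀ i, a i ∈ Set.Icc (0:ℝ) 1) (hb : ∀ j, b j ∈ Set.Ioc (0:ℝ) (1 - ε))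
    (haS : Summable a) (hbS : Summable b)
    (hS1 : Summable (fun p : ℕ × ℕ =>
      ‖(inner ℂ (u p.1) (v p.2) : ℂ)‖^2 * (a p.1 * (Real.log (a p.1) - Real.log (b p.2)))))
    (hS2 : Summable (fun p : ℕ × ℕ =>
      ‖(inner ℂ (u p.1) (v p.2) : ℂ)‖^2 * (a p.1 - b p.2)^2))
    (hS3 : Summable (fun p : ℕ × ℕ =>
      ‖(inner ℂ (u p.1) (v p.2) : ℂ)‖^2 * (a p.1 - b p.2))) :
    ∑' p : ℕ × ℕ, ‖(inner ℂ (u p.1) (v p.2) : ℂ)‖^2 * (a p.1 * (Real.log (a p.1) - Real.log (b p.2)))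
      ≥ g (1 - ε) * ∑' p : ℕ × ℕ, ‖(inner ℂ (u p.1) (v p.2) : ℂ)‖^2 * (a p.1 - b p.2)^2
        + ∑' p : ℕ × ℕ, ‖(inner ℂ (u p.1) (v p.2) : ℂ)‖^2 * (a p.1 - b p.2) :=
  stmt2_general u v a b ε hε ha hb hS1 hS2 hS3
end

section
/- Let x₁, …, x_N ∈ ℝ² and let w(x) = −log|x|. Suppose ρ ≥ 0 is integrable with ∫ρ = N, and for each i let μ_{x_i} be a probability measure radially symmetric about x_i such that the bilinear form D(f,g) = −∬ f(x) log|x−y| g(y) dx dy is finite for all relevant combinations and D(f,f) ≥ 0 whenever ∫f = 0. Then Σ_{1≤i<j≤N} w(x_i − x_j) ≥ −(1/2) D(ρ, ρ) + Σ_{i=1}^N D(ρ, μ_{x_i}) − (1/2) Σ_{i=1}^N D(μ_{x_i}, μ_{x_i}), using Newton's theorem D(μ_{x_i}, μ_{x_j}) ≤ w(x_i − x_j) for i ≠ j. -/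
open MeasureTheory

lemma pair_sum_split {N : ℕ} (g : Fin N → Fin N → ℝ) (hg : ∀ i j, g i j = g j i) :
    ∑ i, ∑ j, g i j =
      ∑ i, g i i + 2 * ∑ p ∈ Finset.univ.filter (fun p : Fin N × Fin N => p.1 < p.2), g p.1 p.2 := by
  rw [← Finset.sum_product']
  have huniv : (Finset.univ : Finset (Fin N × Fin N)) = Finset.univ ×ˢ Finset.univ := by
    simp
  rw [huniv, ← Finset.sum_filter_add_sum_filter_not (Finset.univ ×ˢ Finset.univ)
    (fun p : Fin N × Fin N => p.1 = p.2)]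
  have h1 : ∑ p ∈ (Finset.univ ×ˢ Finset.univ).filter (fun p : Fin N × Fin N => p.1 = p.2),
      g p.1 p.2 = ∑ i, g i i := by
    apply Finset.sum_nbij' (fun p : Fin N × Fin N => p.1) (fun i => (i, i)) <;> simp +contextual [eq_comm]
  have hset : (Finset.univ ×ˢ Finset.univ).filter (fun p : Fin N × Fin N => ¬ p.1 = p.2)
      = (Finset.univ ×ˢ Finset.univ).filter (fun p : Fin N × Fin N => p.1 < p.2)
        ∪ (Finset.univ ×ˢ Finset.univ).filter (fun p : Fin N × Fin N => p.2 < p.1) := by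
    ext p
    simp only [Finset.mem_filter, Finset.mem_union]
    constructor
    · rintro ⟨hm, h⟩
      rcases lt_or_gt_of_ne h with h' | h'
      · exact Or.inl ⟨hm, h'⟩
      · exact Or.inr ⟨hm, h'⟩
    · rintro (⟨hm, h⟩ | ⟨hm, h⟩)
      · exact ⟨hm, ne_of_lt h⟩
      · exact ⟨hm, (ne_of_lt h).symm⟩
  have hdisj : Disjoint
      ((Finset.univ ×ˢ Finset.univ).filter (fun p : Fin N × Fin N => p.1 < p.2))
      ((Finset.univ ×ˢ Finset.univ).filter (fun p : Fin N × Fin N => p.2 < p.1)) := by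
    rw [Finset.disjoint_filter]
    intro p _ h1 h2
    exact absurd h2 (not_lt_of_gt h1)
  have h2 : ∑ p ∈ (Finset.univ ×ˢ Finset.univ).filter (fun p : Fin N × Fin N => p.2 < p.1),
      g p.1 p.2 = ∑ p ∈ (Finset.univ ×ˢ Finset.univ).filter
        (fun p : Fin N × Fin N => p.1 < p.2), g p.1 p.2 := by
    apply Finset.sum_nbij' (fun p : Fin N × Fin N => Prod.swap p) (fun p => Prod.swap p) <;>
      simp +contextual [hg _ _]
  rw [hset, Finset.sum_union hdisj, h1, h2]
  rw [← huniv]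
  ring

/-- Onsager-type estimate for the 2D Coulomb kernel `w(x) = -log|x|`.
`D` is the abstract (symmetric bilinear) Coulomb energy `D(f,g) = ∬ f(x) w(x-y) g(y)`,
assumed nonnegative on mean-zero integrable functions, and the measures `μ_{x_i}`
(given by densities) are radially symmetric probability measures about the points `x_i`
satisfying Newton's theorem `D(μ_{x_i}, μ_{x_j}) ≤ w(x_i - x_j)` for `i ≠ j`. -/
theorem stmt5 (N : ℕ) (x : Fin N → EuclideanSpace ℝ (Fin 2))
    (ρ : EuclideanSpace ℝ (Fin 2) → ℝ) (μ : Fin N → EuclideanSpace ℝ (Fin 2) → ℝ)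
    (D : (EuclideanSpace ℝ (Fin 2) → ℝ) →ₗ[ℝ] (EuclideanSpace ℝ (Fin 2) → ℝ) →ₗ[ℝ] ℝ)
    (hDsymm : ∀ f g, D f g = D g f)
    (hDpos : ∀ f : EuclideanSpace ℝ (Fin 2) → ℝ, Integrable f → (∫ y, f y) = 0 → 0 ≤ D f f)
    (hρpos : ∀ y, 0 ≤ ρ y) (hρint : Integrable ρ) (hρmass : (∫ y, ρ y) = N)
    (hμpos : ∀ i y, 0 ≤ μ i y) (hμint : ∀ i, Integrable (μ i))
    (hμmass : ∀ i, (∫ y, μ i y) = 1)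
    (hμrad : ∀ i y z, ‖y - x i‖ = ‖z - x i‖ → μ i y = μ i z)
    (hNewton : ∀ i j, i ≠ j → D (μ i) (μ j) ≤ -Real.log ‖x i - x j‖) :
    ∑ p ∈ Finset.univ.filter (fun p : Fin N × Fin N => p.1 < p.2), -Real.log ‖x p.1 - x p.2‖
      ≥ -(1/2) * D ρ ρ + ∑ i, D ρ (μ i) - (1/2) * ∑ i, D (μ i) (μ i) := by
  set f : EuclideanSpace ℝ (Fin 2) → ℝ := ρ - ∑ i, μ i with hf
  have hsumint : Integrable (∑ i, μ i) := by
    have h := integrable_finset_sum (s := Finset.univ) (μ := volume) (f := μ) (fun i _ => hμint i)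
    simpa [Finset.sum_fn] using h
  have hfint : Integrable f := hρint.sub hsumint
  have hfmean : (∫ y, f y) = 0 := by
    have hs : (∫ y, (∑ i, μ i) y) = (N : ℝ) := by
      simp only [Finset.sum_apply]
      rw [integral_finset_sum Finset.univ (fun i _ => hμint i)]
      simp [hμmass]
    have hsub : (∫ y, f y) = (∫ y, ρ y) - (∫ y, (∑ i, μ i) y) := by
      simp only [hf, Pi.sub_apply]
      exact integral_sub hρint hsumint
    rw [hsub, hρmass, hs, sub_self]
  have hpos := hDpos f hfint hfmean
  have hexp : D f f = D ρ ρ - 2 * ∑ i, D ρ (μ i) + ∑ i, ∑ j, D (μ i) (μ j) := by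
    rw [hf]
    simp only [map_sub, map_sum, LinearMap.sub_apply, LinearMap.sum_apply]
    have hsy : ∀ i, D (μ i) ρ = D ρ (μ i) := fun i => hDsymm _ _
    simp only [hsy]
    rw [Finset.sum_sub_distrib, Finset.sum_comm]
    ring
  have hsplit := pair_sum_split (fun i j => D (μ i) (μ j)) (fun i j => hDsymm _ _)
  have hbound : ∑ p ∈ Finset.univ.filter (fun p : Fin N × Fin N => p.1 < p.2),
      D (μ p.1) (μ p.2) ≤
      ∑ p ∈ Finset.univ.filter (fun p : Fin N × Fin N => p.1 < p.2), -Real.log ‖x p.1 - x p.2‖ := by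
    apply Finset.sum_le_sum
    intro p hp
    simp only [Finset.mem_filter] at hp
    exact hNewton _ _ (ne_of_lt hp.2)
  rw [hexp, hsplit] at hpos
  linarith
end

section
/- Let H be a separable Hilbert space, f, g : ℝ → [0,1] Lipschitz functions with f² + g² ≡ 1, and A a nonnegative bounded self-adjoint operator on a direct sum ⊕_{j≥0} H_j (with H_j closed mutually orthogonal subspaces) such that P_i A P_j = 0 whenever |i − j| > σ, where P_j is the orthogonal projection onto H_j. Define f_M = Σ_j f(j/M) P_j and g_M = Σ_j g(j/M) P_j. Then for every unit vector Φ, |⟨Φ, AΦ⟩ − ⟨f_M Φ, A f_M Φ⟩ − ⟨g_M Φ, A g_M Φ⟩| ≤ 2σ · (‖f‖_Lip² + ‖g‖_Lip²) · (σ/M)² · ⟨Φ, A₀ Φ⟩, where A₀ = Σ_j P_j A P_j is the diagonal part of A. -/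
open Finset
open scoped InnerProductSpace ComplexConjugate

/-!
With `q i j = ⟪P i Φ, A (P j Φ)⟫`, the band condition turns
`⟪Φ, A Φ⟫ - ⟪f_M Φ, A f_M Φ⟫ - ⟪g_M Φ, A g_M Φ⟫` into
`∑_j ∑_{|i - j| ≤ σ} (1 - f_i f_j - g_i g_j) q i j`.
Because `f² + g² = 1` the coefficient equals `((f_i - f_j)² + (g_i - g_j)²) / 2`, which the
Lipschitz bounds make at most `(‖f‖²_Lip + ‖g‖²_Lip) (σ/M)² / 2`, while positivity of `A` gives
`‖q i j‖ ≤ (q i i + q j j) / 2`. Every diagonal term `q i i` occurs in at most `2σ + 1` rows, so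
the sum is at most `(2σ + 1) (‖f‖²_Lip + ‖g‖²_Lip) (σ/M)² ⟨Φ, A₀ Φ⟩ / 2`, which is below the
claimed bound (both vanish when `σ = 0`).
-/

namespace ContinuousLinearMap

variable {𝕜 E : Type*} [RCLike 𝕜] [NormedAddCommGroup E] [InnerProductSpace 𝕜 E]

/-- Expand `0 ≤ re ⟪x - c • y, T (x - c • y)⟫` for the unimodular `c` with
`c ⟪x, T y⟫ = ‖⟪x, T y⟫‖`. -/
theorem IsPositive.norm_inner_le {T : E →L[𝕜] E} (hT : T.IsPositive) (x y : E) :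
    ‖⟪x, T y⟫_𝕜‖ ≤ (RCLike.re ⟪x, T x⟫_𝕜 + RCLike.re ⟪y, T y⟫_𝕜) / 2 := by
  obtain ⟨c, hc, hcz⟩ := RCLike.exists_norm_eq_mul_self ⟪x, T y⟫_𝕜
  have hyx : ⟪y, T x⟫_𝕜 = conj ⟪x, T y⟫_𝕜 := by
    rw [← hT.inner_left_eq_inner_right, inner_conj_symm]
  have hexpand : ⟪x - c • y, T (x - c • y)⟫_𝕜
      = ⟪x, T x⟫_𝕜 - (c * ⟪x, T y⟫_𝕜 + conj (c * ⟪x, T y⟫_𝕜)) + conj c * c * ⟪y, T y⟫_𝕜 := by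
    simp only [map_sub, map_smul, inner_sub_left, inner_sub_right, inner_smul_left,
      inner_smul_right, hyx, map_mul]
    ring
  have hnonneg := hT.re_inner_nonneg_right (x - c • y)
  rw [hexpand, ← hcz, RCLike.conj_mul, hc, RCLike.conj_ofReal] at hnonneg
  simp only [map_add, map_sub, RCLike.ofReal_re, one_pow, RCLike.ofReal_one, one_mul] at hnonneg
  linarith

end ContinuousLinearMap

section BandExpansion

variable {𝕜 E : Type*} [RCLike 𝕜] [NormedAddCommGroup E] [InnerProductSpace 𝕜 E]

theorem hasSum_sum_inner_of_inner_eq_zero {ι κ : Type*} {x : ι → E} {y : κ → E} {X Y : E}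
    (hx : HasSum x X) (hy : HasSum y Y) (s : κ → Finset ι)
    (hs : ∀ i j, i ∉ s j → ⟪x i, y j⟫_𝕜 = 0) :
    HasSum (fun j => ∑ i ∈ s j, ⟪x i, y j⟫_𝕜) ⟪X, Y⟫_𝕜 := by
  have hrow (j : κ) : ⟪X, y j⟫_𝕜 = ∑ i ∈ s j, ⟪x i, y j⟫_𝕜 :=
    (hx.mapL (innerSLFlip 𝕜 (y j))).unique (hasSum_sum_of_ne_finset_zero (hs · j))
  simpa only [innerSL_apply_apply, hrow] using hy.mapL (innerSL 𝕜 X)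

end BandExpansion

section ComplexBandExpansion

variable {E : Type*} [NormedAddCommGroup E] [InnerProductSpace ℂ E]

theorem hasSum_inner_apply_of_hasSum_smul {v : ℕ → E} {A : E →L[ℂ] E} {s : ℕ → Finset ℕ}
    (hv : ∀ i j, i ∉ s j → ⟪v i, A (v j)⟫_ℂ = 0) {w : ℕ → ℝ} {W : E}
    (hW : HasSum (fun j => w j • v j) W) :
    HasSum (fun j => ∑ i ∈ s j, (w i * w j) • ⟪v i, A (v j)⟫_ℂ) ⟪W, A W⟫_ℂ := by
  have hsmul (i j : ℕ) : ⟪w i • v i, A (w j • v j)⟫_ℂ = (w i * w j) • ⟪v i, A (v j)⟫_ℂ := by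
    rw [← Complex.coe_smul, ← Complex.coe_smul, map_smul, inner_smul_left, inner_smul_right,
      Complex.conj_ofReal, Complex.real_smul, Complex.ofReal_mul, mul_assoc]
  refine (hasSum_sum_inner_of_inner_eq_zero hW (hW.mapL A) s fun i j h => ?_).congr_fun
    fun j => ?_
  · rw [hsmul, hv i j h, smul_zero]
  · simp only [hsmul]

theorem hasSum_inner_apply_sub_sub {v : ℕ → E} {A : E →L[ℂ] E} {s : ℕ → Finset ℕ}
    (hv : ∀ i j, i ∉ s j → ⟪v i, A (v j)⟫_ℂ = 0) {c d : ℕ → ℝ} {X Y Z : E}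
    (hX : HasSum v X) (hY : HasSum (fun j => c j • v j) Y)
    (hZ : HasSum (fun j => d j • v j) Z) :
    HasSum (fun j => ∑ i ∈ s j, (1 - c i * c j - d i * d j) • ⟪v i, A (v j)⟫_ℂ)
      (⟪X, A X⟫_ℂ - ⟪Y, A Y⟫_ℂ - ⟪Z, A Z⟫_ℂ) := by
  have hX' := hasSum_inner_apply_of_hasSum_smul hv (w := 1) (by simpa using hX)
  refine ((hX'.sub (hasSum_inner_apply_of_hasSum_smul hv hY)).sub
    (hasSum_inner_apply_of_hasSum_smul hv hZ)).congr_fun fun j => ?_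
  simp only [← sum_sub_distrib, ← sub_smul, Pi.one_apply, mul_one]

end ComplexBandExpansion

def band (σ j : ℕ) : Finset ℕ := Icc (j - σ) (j + σ)

theorem mem_band {σ i j : ℕ} : i ∈ band σ j ↔ i ≤ j + σ ∧ j ≤ i + σ := by
  simp only [band, mem_Icc]
  omega

theorem card_band_le (σ j : ℕ) : #(band σ j) ≤ 2 * σ + 1 := by
  simp only [band, Nat.card_Icc]
  omega

section BandSums

variable {a : ℕ → ℝ}

theorem sum_range_sum_band_le (ha : 0 ≤ a) (hs : Summable a) (σ N : ℕ) :
    ∑ j ∈ range N, ∑ i ∈ band σ j, a i ≤ (2 * σ + 1) * ∑' i, a i := by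
  have hcard (i : ℕ) : #((range N).filter (· ∈ band σ i)) ≤ 2 * σ + 1 :=
    (card_le_card fun _ hj => (mem_filter.1 hj).2).trans (card_band_le σ i)
  calc ∑ j ∈ range N, ∑ i ∈ band σ j, a i
      = ∑ i ∈ range (N + σ), ∑ j ∈ (range N).filter (· ∈ band σ i), a i :=
        sum_comm' fun j i => by simp only [mem_filter, mem_range, mem_band]; omega
    _ ≤ ∑ i ∈ range (N + σ), (2 * σ + 1) * a i := by
        gcongr with i
        rw [sum_const, nsmul_eq_mul]
        gcongr
        · exact ha i
        · exact_mod_cast hcard i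
    _ ≤ (2 * σ + 1) * ∑' i, a i := by
        rw [← mul_sum]
        gcongr
        exact hs.sum_le_tsum _ fun i _ => ha i

theorem summable_sum_band (ha : 0 ≤ a) (hs : Summable a) (σ : ℕ) :
    Summable (fun j => ∑ i ∈ band σ j, a i) :=
  summable_of_sum_range_le (fun _ => sum_nonneg fun i _ => ha i) (sum_range_sum_band_le ha hs σ)

theorem tsum_sum_band_le (ha : 0 ≤ a) (hs : Summable a) (σ : ℕ) :
    ∑' j, ∑ i ∈ band σ j, a i ≤ (2 * σ + 1) * ∑' i, a i :=
  Real.tsum_le_of_sum_range_le (fun _ => sum_nonneg fun i _ => ha i)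
    (sum_range_sum_band_le ha hs σ)

end BandSums

theorem norm_le_of_hasSum_sum_band {F : Type*} [NormedAddCommGroup F] [NormedSpace ℝ F]
    {q : ℕ → ℕ → F} {κ : ℕ → ℕ → ℝ} {a : ℕ → ℝ} {α C : ℝ} {T : F} {σ : ℕ}
    (ha : HasSum a α) (hq : ∀ i j, ‖q i j‖ ≤ (a i + a j) / 2)
    (hκ : ∀ j, ∀ i ∈ band σ j, |κ i j| ≤ C)
    (hT : HasSum (fun j => ∑ i ∈ band σ j, κ i j • q i j) T) :
    ‖T‖ ≤ (2 * σ + 1) * C * α := by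
  have ha0 : 0 ≤ a := fun i => by
    change 0 ≤ a i
    linarith [hq i i, norm_nonneg (q i i)]
  have hC : 0 ≤ C := (abs_nonneg _).trans (hκ 0 0 (mem_band.2 ⟨le_add_self, le_add_self⟩))
  have hrow (j : ℕ) : ‖∑ i ∈ band σ j, κ i j • q i j‖
      ≤ C / 2 * (∑ i ∈ band σ j, a i + (2 * σ + 1) * a j) :=
    calc ‖∑ i ∈ band σ j, κ i j • q i j‖
        ≤ ∑ i ∈ band σ j, C * ((a i + a j) / 2) := by
          refine (norm_sum_le _ _).trans (sum_le_sum fun i hi => ?_)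
          rw [norm_smul, Real.norm_eq_abs]
          exact mul_le_mul (hκ j i hi) (hq i j) (norm_nonneg _) hC
      _ = C / 2 * (∑ i ∈ band σ j, a i + #(band σ j) * a j) := by
          rw [← mul_sum, ← sum_div, sum_add_distrib, sum_const, nsmul_eq_mul]
          ring
      _ ≤ C / 2 * (∑ i ∈ band σ j, a i + (2 * σ + 1) * a j) := by
          gcongr
          · exact ha0 j
          · exact_mod_cast card_band_le σ j
  have hsum := ((summable_sum_band ha0 ha.summable σ).hasSum.add
    (ha.mul_left (2 * σ + 1 : ℝ))).mul_left (C / 2)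
  calc ‖T‖ ≤ C / 2 * (∑' j, ∑ i ∈ band σ j, a i + (2 * σ + 1) * α) :=
        hT.norm_le_of_bounded hsum hrow
    _ ≤ C / 2 * ((2 * σ + 1) * α + (2 * σ + 1) * α) := by
        gcongr
        simpa only [ha.tsum_eq] using tsum_sum_band_le ha0 ha.summable σ
    _ = (2 * σ + 1) * C * α := by ring

theorem LipschitzWith.sq_sub_le {f : ℝ → ℝ} {K : NNReal} (hf : LipschitzWith K f) (s t : ℝ) :
    (f s - f t) ^ 2 ≤ K ^ 2 * (s - t) ^ 2 := by
  have h := hf.dist_le_mul s t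
  rw [Real.dist_eq, Real.dist_eq] at h
  calc (f s - f t) ^ 2 = |f s - f t| ^ 2 := (sq_abs _).symm
    _ ≤ (K * |s - t|) ^ 2 := by gcongr
    _ = K ^ 2 * (s - t) ^ 2 := by rw [mul_pow, sq_abs]

/-- The IMS identity `1 - f(s)f(t) - g(s)g(t) = ((f(s) - f(t))² + (g(s) - g(t))²) / 2`. -/
theorem abs_one_sub_mul_sub_mul_le {f g : ℝ → ℝ} {Lf Lg : NNReal}
    (hfg : ∀ t, f t ^ 2 + g t ^ 2 = 1) (hf : LipschitzWith Lf f) (hg : LipschitzWith Lg g)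
    (s t : ℝ) :
    |1 - f s * f t - g s * g t| ≤ (Lf ^ 2 + Lg ^ 2) * (s - t) ^ 2 / 2 := by
  have hid : 1 - f s * f t - g s * g t = ((f s - f t) ^ 2 + (g s - g t) ^ 2) / 2 := by
    linear_combination -(hfg s + hfg t) / 2
  rw [hid, abs_of_nonneg (by positivity)]
  linarith [hf.sq_sub_le s t, hg.sq_sub_le s t]

theorem abs_one_sub_mul_sub_mul_le_of_mem_band {f g : ℝ → ℝ} {Lf Lg : NNReal}
    (hfg : ∀ t, f t ^ 2 + g t ^ 2 = 1) (hf : LipschitzWith Lf f) (hg : LipschitzWith Lg g)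
    (M : ℝ) {σ i j : ℕ} (hi : i ∈ band σ j) :
    |1 - f (i / M) * f (j / M) - g (i / M) * g (j / M)| ≤ (Lf ^ 2 + Lg ^ 2) * (σ / M) ^ 2 / 2 := by
  rw [mem_band] at hi
  have hij : ((i : ℝ) - j) ^ 2 ≤ σ ^ 2 := by
    have h1 : (i : ℝ) ≤ j + σ := by exact_mod_cast hi.1
    have h2 : (j : ℝ) ≤ i + σ := by exact_mod_cast hi.2
    exact sq_le_sq' (by linarith) (by linarith)
  refine (abs_one_sub_mul_sub_mul_le hfg hf hg _ _).trans ?_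
  rw [← sub_div, div_pow, div_pow]
  gcongr

theorem stmt9_general {H : Type*} [NormedAddCommGroup H] [InnerProductSpace ℂ H] [CompleteSpace H]
    (P : ℕ → H →L[ℂ] H)
    (hPsa : ∀ j, IsSelfAdjoint (P j))
    (hPcomplete : ∀ x : H, HasSum (fun j => P j x) x)
    (A : H →L[ℂ] H) (hAsa : IsSelfAdjoint A)
    (hApos : ∀ x : H, 0 ≤ (inner ℂ x (A x) : ℂ).re)
    (σ : ℕ) (hband : ∀ i j : ℕ, σ < ((i : ℤ) - (j : ℤ)).natAbs →
      (P i).comp (A.comp (P j)) = 0)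
    (f g : ℝ → ℝ)
    (Lf Lg : NNReal) (hLf : LipschitzWith Lf f) (hLg : LipschitzWith Lg g)
    (hfg : ∀ t, f t ^ 2 + g t ^ 2 = 1)
    (M : ℝ)
    (fM gM A0 : H →L[ℂ] H)
    (hfM : ∀ x : H, HasSum (fun j : ℕ => f (j / M) • P j x) (fM x))
    (hgM : ∀ x : H, HasSum (fun j : ℕ => g (j / M) • P j x) (gM x))
    (hA0 : ∀ x : H, HasSum (fun j : ℕ => P j (A (P j x))) (A0 x))
    (Φ : H) :
    |(inner ℂ Φ (A Φ) : ℂ).re - (inner ℂ (fM Φ) (A (fM Φ)) : ℂ).re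
        - (inner ℂ (gM Φ) (A (gM Φ)) : ℂ).re|
      ≤ 2 * σ * ((Lf : ℝ)^2 + (Lg : ℝ)^2) * ((σ : ℝ) / M)^2 * (inner ℂ Φ (A0 Φ) : ℂ).re := by
  have hA : A.IsPositive := ContinuousLinearMap.isPositive_def'.2
    ⟨hAsa, fun x => by
      rw [ContinuousLinearMap.reApplyInnerSelf_apply, hAsa.isSymmetric.apply_clm]
      exact hApos x⟩
  set q : ℕ → ℕ → ℂ := fun i j => ⟪P i Φ, A (P j Φ)⟫_ℂ
  have hq (i j : ℕ) (hij : i ∉ band σ j) : q i j = 0 := by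
    rw [mem_band] at hij
    calc q i j = ⟪Φ, (P i).comp (A.comp (P j)) Φ⟫_ℂ := (hPsa i).isSymmetric _ _
      _ = 0 := by rw [hband i j (by omega), zero_apply, inner_zero_right]
  have hdiag : HasSum (fun j => (q j j).re) (⟪Φ, A0 Φ⟫_ℂ).re :=
    Complex.hasSum_re <| ((hA0 Φ).mapL (innerSL ℂ Φ)).congr_fun fun j => (hPsa j).isSymmetric _ _
  have hT := hasSum_inner_apply_sub_sub hq (hPcomplete Φ) (hfM Φ) (hgM Φ)
  have hα : 0 ≤ (⟪Φ, A0 Φ⟫_ℂ).re := hdiag.nonneg fun j => hA.re_inner_nonneg_right _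
  rw [← Complex.sub_re, ← Complex.sub_re]
  calc _ ≤ ‖⟪Φ, A Φ⟫_ℂ - ⟪fM Φ, A (fM Φ)⟫_ℂ - ⟪gM Φ, A (gM Φ)⟫_ℂ‖ := Complex.abs_re_le_norm _
    _ ≤ (2 * σ + 1) * ((Lf ^ 2 + Lg ^ 2) * (σ / M) ^ 2 / 2) * (⟪Φ, A0 Φ⟫_ℂ).re :=
      norm_le_of_hasSum_sum_band hdiag (fun i j => hA.norm_inner_le _ _)
        (fun j i => abs_one_sub_mul_sub_mul_le_of_mem_band hfg hLf hLg M) hT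
    _ ≤ _ := by
      have hKX : 0 ≤ ((Lf : ℝ) ^ 2 + Lg ^ 2) * (σ / M) ^ 2 * (⟪Φ, A0 Φ⟫_ℂ).re := by positivity
      rcases Nat.eq_zero_or_pos σ with rfl | hσ
      · simp
      · have : (1 : ℝ) ≤ σ := by exact_mod_cast hσ
        nlinarith

/-- IMS localization formula for band operators on a graded Hilbert space
`H = ⊕_{j≥0} H_j` (the `H_j` being the ranges of orthogonal projections `P j` summing
to the identity).  If `A ≥ 0` is a band operator of width `σ` and `f, g : ℝ → [0,1]`
are Lipschitz with `f² + g² ≡ 1`, then with `f_M = Σ_j f(j/M) P_j`,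
`g_M = Σ_j g(j/M) P_j` and diagonal part `A₀ = Σ_j P_j A P_j`, for every unit vector `Φ`:
`|⟨Φ,AΦ⟩ - ⟨f_M Φ, A f_M Φ⟩ - ⟨g_M Φ, A g_M Φ⟩| ≤ 2σ (‖f‖_Lip² + ‖g‖_Lip²) (σ/M)² ⟨Φ, A₀Φ⟩`. -/
theorem stmt9 {H : Type*} [NormedAddCommGroup H] [InnerProductSpace ℂ H] [CompleteSpace H]
    (P : ℕ → H →L[ℂ] H)
    (hPproj : ∀ j, (P j).comp (P j) = P j) (hPsa : ∀ j, IsSelfAdjoint (P j))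
    (hPorth : ∀ i j, i ≠ j → (P i).comp (P j) = 0)
    (hPcomplete : ∀ x : H, HasSum (fun j => P j x) x)
    (A : H →L[ℂ] H) (hAsa : IsSelfAdjoint A)
    (hApos : ∀ x : H, 0 ≤ (inner ℂ x (A x) : ℂ).re)
    (σ : ℕ) (hband : ∀ i j : ℕ, σ < ((i : ℤ) - (j : ℤ)).natAbs →
      (P i).comp (A.comp (P j)) = 0)
    (f g : ℝ → ℝ) (hf01 : ∀ t, f t ∈ Set.Icc (0:ℝ) 1) (hg01 : ∀ t, g t ∈ Set.Icc (0:ℝ) 1)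
    (Lf Lg : NNReal) (hLf : LipschitzWith Lf f) (hLg : LipschitzWith Lg g)
    (hfg : ∀ t, f t ^ 2 + g t ^ 2 = 1)
    (M : ℝ) (hM : 0 < M)
    (fM gM A0 : H →L[ℂ] H)
    (hfM : ∀ x : H, HasSum (fun j : ℕ => f (j / M) • P j x) (fM x))
    (hgM : ∀ x : H, HasSum (fun j : ℕ => g (j / M) • P j x) (gM x))
    (hA0 : ∀ x : H, HasSum (fun j : ℕ => P j (A (P j x))) (A0 x))
    (Φ : H) (hΦ : ‖Φ‖ = 1) :
    |(inner ℂ Φ (A Φ) : ℂ).re - (inner ℂ (fM Φ) (A (fM Φ)) : ℂ).re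
        - (inner ℂ (gM Φ) (A (gM Φ)) : ℂ).re|
      ≤ 2 * σ * ((Lf : ℝ)^2 + (Lg : ℝ)^2) * ((σ : ℝ) / M)^2 * (inner ℂ Φ (A0 Φ) : ℂ).re :=
  stmt9_general P hPsa hPcomplete A hAsa hApos σ hband f g Lf Lg hLf hLg hfg M fM gM A0 hfM hgM hA0
    Φ
end

section
/- Let Y be an L-dimensional subspace of a Hilbert space, and let f_M, g_M be bounded self-adjoint operators with f_M² + g_M² = 1 (as operators). If ‖g_M Φ‖² < 1/L for every unit vector Φ ∈ Y, then dim(f_M Y) = L. -/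
/-!
Since `f² + g² = 1` with `f, g` self-adjoint, `‖f Φ‖² + ‖g Φ‖² = ‖Φ‖²` for every `Φ`. As
`1/L ≤ 1`, the hypothesis makes `g` a strict contraction on the nonzero vectors of `Y`, so no
nonzero `Φ ∈ Y` has `f Φ = 0`. Thus `f` is injective on `Y` and preserves its dimension.
-/

open ContinuousLinearMap

theorem Submodule.finrank_map_of_disjoint_ker {R M N : Type*} [Ring R] [AddCommGroup M]
    [AddCommGroup N] [Module R M] [Module R N] (f : M →ₗ[R] N) (Y : Submodule R M)
    (h : Disjoint Y (LinearMap.ker f)) :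
    Module.finrank R (Y.map f) = Module.finrank R Y := by
  have hinj : Function.Injective (f.domRestrict Y) := LinearMap.injective_domRestrict_iff.mpr h
  rw [← LinearMap.range_domRestrict, (LinearEquiv.ofInjective _ hinj).finrank_eq]

theorem Submodule.norm_apply_lt_norm_of_forall_norm_eq_one {𝕜 E F : Type*} [RCLike 𝕜]
    [NormedAddCommGroup E] [NormedSpace 𝕜 E] [NormedAddCommGroup F] [NormedSpace 𝕜 F]
    {Y : Submodule 𝕜 E} (g : E →L[𝕜] F) (hg : ∀ Φ ∈ Y, ‖Φ‖ = 1 → ‖g Φ‖ < 1) {x : E}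
    (hx : x ∈ Y) (hx0 : x ≠ 0) : ‖g x‖ < ‖x‖ := by
  have hnorm : 0 < ‖x‖ := norm_pos_iff.mpr hx0
  have hunit := hg ((‖x‖⁻¹ : 𝕜) • x) (Y.smul_mem _ hx) (norm_smul_inv_norm hx0)
  rw [map_smul, norm_smul, norm_inv, RCLike.norm_ofReal, abs_norm, inv_mul_lt_iff₀ hnorm,
    mul_one] at hunit
  exact hunit

section InnerProductSpace

variable {𝕜 H : Type*} [RCLike 𝕜] [NormedAddCommGroup H] [InnerProductSpace 𝕜 H]
  [CompleteSpace H] {f g : H →L[𝕜] H}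

theorem IsSelfAdjoint.norm_sq_add_norm_sq_eq (hf : IsSelfAdjoint f) (hg : IsSelfAdjoint g)
    (hfg : f ∘L f + g ∘L g = 1) (x : H) : ‖f x‖ ^ 2 + ‖g x‖ ^ 2 = ‖x‖ ^ 2 := by
  rw [apply_norm_sq_eq_inner_adjoint_left f, apply_norm_sq_eq_inner_adjoint_left g,
    hf.adjoint_eq, hg.adjoint_eq, ← map_add, ← inner_add_left, ← add_apply, hfg,
    one_apply_eq_self, ← inner_self_eq_norm_sq (𝕜 := 𝕜)]

theorem IsSelfAdjoint.disjoint_ker_of_norm_lt (hf : IsSelfAdjoint f) (hg : IsSelfAdjoint g)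
    (hfg : f ∘L f + g ∘L g = 1) {Y : Submodule 𝕜 H} (hY : ∀ x ∈ Y, x ≠ 0 → ‖g x‖ < ‖x‖) :
    Disjoint Y (LinearMap.ker (f : H →ₗ[𝕜] H)) := by
  rw [Submodule.disjoint_def]
  intro x hxY hxker
  by_contra hx0
  have hpyth := hf.norm_sq_add_norm_sq_eq hg hfg x
  have hfx : f x = 0 := hxker
  rw [hfx, norm_zero, sq, zero_mul, zero_add] at hpyth
  exact (pow_lt_pow_left₀ (hY x hxY hx0) (norm_nonneg _) two_ne_zero).ne hpyth

end InnerProductSpace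

theorem stmt10_general {H : Type*} [NormedAddCommGroup H] [InnerProductSpace ℂ H] [CompleteSpace H]
    (Y : Submodule ℂ H) (L : ℕ)
    (hY : Module.finrank ℂ Y = L)
    (fM gM : H →L[ℂ] H) (hfsa : IsSelfAdjoint fM) (hgsa : IsSelfAdjoint gM)
    (hfg : fM.comp fM + gM.comp gM = 1)
    (hsmall : ∀ Φ ∈ Y, ‖Φ‖ = 1 → ‖gM Φ‖^2 < 1 / (L : ℝ)) :
    Module.finrank ℂ (Y.map (fM : H →ₗ[ℂ] H)) = L := by
  have hL : 1 / (L : ℝ) ≤ 1 := (one_div (L : ℝ)).trans_le (Nat.cast_inv_le_one L)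
  have hunit : ∀ Φ ∈ Y, ‖Φ‖ = 1 → ‖gM Φ‖ < 1 := fun Φ hΦ hΦ1 =>
    (sq_lt_one_iff₀ (norm_nonneg _)).mp ((hsmall Φ hΦ hΦ1).trans_le hL)
  have hdisj := hfsa.disjoint_ker_of_norm_lt hgsa hfg
    (fun _ hx hx0 => Y.norm_apply_lt_norm_of_forall_norm_eq_one gM hunit hx hx0)
  rw [Submodule.finrank_map_of_disjoint_ker _ Y hdisj, hY]

/-- If `Y` is an `L`-dimensional subspace of a Hilbert space, `f_M, g_M` are bounded
self-adjoint operators with `f_M² + g_M² = 1`, and `‖g_M Φ‖² < 1/L` for every unit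
vector `Φ ∈ Y`, then `dim (f_M Y) = L`. -/
theorem stmt10 {H : Type*} [NormedAddCommGroup H] [InnerProductSpace ℂ H] [CompleteSpace H]
    (Y : Submodule ℂ H) [FiniteDimensional ℂ Y] (L : ℕ)
    (hY : Module.finrank ℂ Y = L)
    (fM gM : H →L[ℂ] H) (hfsa : IsSelfAdjoint fM) (hgsa : IsSelfAdjoint gM)
    (hfg : fM.comp fM + gM.comp gM = 1)
    (hsmall : ∀ Φ ∈ Y, ‖Φ‖ = 1 → ‖gM Φ‖^2 < 1 / (L : ℝ)) :
    Module.finrank ℂ (Y.map (fM : H →ₗ[ℂ] H)) = L :=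
  stmt10_general Y L hY fM gM hfsa hgsa hfg hsmall
end

section
/- Let H be a self-adjoint operator on a Hilbert space 𝔥 and K a Hilbert–Schmidt operator with K = Kᵀ. Suppose the block operator A = [[H, K],[K*, JHJ*]] on 𝔥 ⊕ 𝔥* satisfies A ≥ η > 0 (J being the canonical conjugation). Then for every unit vector u ∈ 𝔥, ⟨u, Hu⟩ ≥ |⟨Ju, Ku⟩| + η. -/
theorem inner_smul_map_smul_of_norm_eq_one {𝕜 E : Type*} [RCLike 𝕜] [SeminormedAddCommGroup E]
    [InnerProductSpace 𝕜 E] {F : Type*} [FunLike F E E] [LinearMapClass F 𝕜 E E] (T : F)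
    {c : 𝕜} (hc : ‖c‖ = 1) (u : E) :
    (inner 𝕜 (c • u) (T (c • u)) : 𝕜) = inner 𝕜 u (T u) := by
  rw [map_smul, inner_smul_right, inner_smul_left, ← mul_assoc, RCLike.mul_conj, hc]
  simp

theorem Complex.exists_norm_eq_one_mul_eq_neg_norm (z : ℂ) :
    ∃ c : ℂ, ‖c‖ = 1 ∧ c * z = -‖z‖ := by
  obtain ⟨c, hc, hcz⟩ := Complex.exists_norm_eq_mul_self z
  exact ⟨-c, by rw [norm_neg, hc], by rw [neg_mul, hcz]⟩

/-- The bound `A ≥ η` on `𝔥 ⊕ 𝔥*` is expressed through the quadratic form of `A` on pairs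
`(u, Jv)`. Testing it on `(u, J(c • u))`, with `c` the phase turning `⟨Ju, Ku⟩` into
`-|⟨Ju, Ku⟩|`, gives the claim. -/
theorem stmt15_general {𝔥 : Type*} [NormedAddCommGroup 𝔥] [InnerProductSpace ℂ 𝔥]
    (H K : 𝔥 →L[ℂ] 𝔥) (J : 𝔥 → 𝔥) (η : ℝ)
    (hpos : ∀ u v : 𝔥, η * (‖u‖^2 + ‖v‖^2)
      ≤ (inner ℂ u (H u) : ℂ).re + (inner ℂ v (H v) : ℂ).re + 2 * (inner ℂ (J u) (K v) : ℂ).re) :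
    ∀ u : 𝔥, ‖u‖ = 1 → ‖(inner ℂ (J u) (K u) : ℂ)‖ + η ≤ (inner ℂ u (H u) : ℂ).re := by
  intro u hu
  obtain ⟨c, hc, hcz⟩ := Complex.exists_norm_eq_one_mul_eq_neg_norm (inner ℂ (J u) (K u))
  have hK : (inner ℂ (J u) (K (c • u)) : ℂ) = -‖(inner ℂ (J u) (K u) : ℂ)‖ := by
    rw [map_smul, inner_smul_right, hcz]
  have h := hpos u (c • u)
  rw [inner_smul_map_smul_of_norm_eq_one H hc, hK, norm_smul, hc, hu] at h
  simp only [Complex.neg_re, Complex.ofReal_re] at h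
  linarith

/-- Non-degeneracy of the block operator `A = [[H, K], [K*, JHJ*]] ≥ η > 0` on `𝔥 ⊕ 𝔥*`
(the dual `𝔥*` being identified with `𝔥` through the canonical conjugation `J`) implies
`⟨u, Hu⟩ ≥ |⟨Ju, Ku⟩| + η` for every unit vector `u`.  The positivity of `A` is expressed
through its quadratic form on pairs `(u, Jv)`, and `K = Kᵀ` through the symmetry of the
bilinear form `(u,v) ↦ ⟨Ju, Kv⟩`. -/
theorem stmt15 {𝔥 : Type*} [NormedAddCommGroup 𝔥] [InnerProductSpace ℂ 𝔥] [CompleteSpace 𝔥]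
    (H K : 𝔥 →L[ℂ] 𝔥) (J : 𝔥 → 𝔥) (η : ℝ) (hη : 0 < η)
    (hH : IsSelfAdjoint H)
    (hJadd : ∀ u v, J (u + v) = J u + J v)
    (hJsmul : ∀ (c : ℂ) (u : 𝔥), J (c • u) = (starRingEnd ℂ) c • J u)
    (hJinner : ∀ u v : 𝔥, (inner ℂ (J u) (J v) : ℂ) = inner ℂ v u)
    (hJJ : ∀ u, J (J u) = u)
    (hKsymm : ∀ u v : 𝔥, (inner ℂ (J u) (K v) : ℂ) = inner ℂ (J v) (K u))
    (hpos : ∀ u v : 𝔥, η * (‖u‖^2 + ‖v‖^2)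
      ≤ (inner ℂ u (H u) : ℂ).re + (inner ℂ v (H v) : ℂ).re + 2 * (inner ℂ (J u) (K v) : ℂ).re) :
    ∀ u : 𝔥, ‖u‖ = 1 → ‖(inner ℂ (J u) (K u) : ℂ)‖ + η ≤ (inner ℂ u (H u) : ℂ).re :=
  stmt15_general H K J η hpos
end

section
/- Let 𝔥₊ be a closed subspace of L²(Ω), u₀ a unit vector orthogonal to 𝔥₊, and let U_N : ⊗_sym^N L²(Ω) → ⊕_{n=0}^N ⊗_sym^n 𝔥₊ map Ψ = Σ_{k=0}^N u₀^{⊗(N−k)} ⊗_s ψ_k (with ψ_k ∈ ⊗_sym^k 𝔥₊) to ψ₀ ⊕ ψ₁ ⊕ ⋯ ⊕ ψ_N. Then U_N is a well-defined unitary operator; in particular ⟨u₀^{⊗(N−k)} ⊗_s ψ_k, u₀^{⊗(N−ℓ)} ⊗_s ψ_ℓ⟩ = δ_{kℓ} ⟨ψ_k, ψ_ℓ⟩ and ‖Ψ‖² = Σ_{k=0}^N ‖ψ_k‖². -/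
open MeasureTheory

/-- The vector `u₀^{⊗(N-k)} ⊗_s ψ ∈ ⊗_sym^N L²(Ω)` obtained by filling up an excitation
vector `ψ ∈ ⊗_sym^k 𝔥₊` with `N - k` particles in the condensate mode `u₀`:
`(u₀^{⊗(N-k)} ⊗_s ψ)(x₁,…,x_N) = ((N-k)! k! N!)^{-1/2}
   Σ_{σ ∈ S_N} u₀(x_{σ(1)})⋯u₀(x_{σ(N-k)}) ψ(x_{σ(N-k+1)},…,x_{σ(N)})`. -/
noncomputable def symTensor {Ω : Type*} (u₀ : Ω → ℂ) (N k : ℕ) (hk : k ≤ N)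
    (ψ : (Fin k → Ω) → ℂ) : (Fin N → Ω) → ℂ := fun x =>
  (((Real.sqrt ((Nat.factorial (N - k) * Nat.factorial k * Nat.factorial N : ℕ)))⁻¹ : ℝ) : ℂ) *
    ∑ σ : Equiv.Perm (Fin N),
      (∏ i : Fin (N - k), u₀ (x (σ (Fin.castLE (Nat.sub_le N k) i)))) *
        ψ (fun j => x (σ (Fin.cast (Nat.sub_add_cancel hk) (Fin.natAdd (N - k) j))))

/-!
Write `u₀^{⊗(N-k)} ⊗_s ψ` as a normalised sum, over `σ ∈ S_N`, of the block tensor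
`x ↦ ∏_{i < N-k} u₀ (x i) · ψ (x_{N-k}, …, x_{N-1})` evaluated at `x ∘ σ`. After the change of
variables `x ↦ x ∘ σ⁻¹`, the inner product of two such vectors becomes `N!` times the sum over
`π ∈ S_N` of `⟨block_a, block_b ∘ π⟩`. If `π` puts a `u₀`-slot of one block onto an excitation
slot of the other, integrating out that single variable produces `⟨u₀, ψ(…, ·, …)⟩ = 0`.
For `k ≠ ℓ` no `π` avoids this, by counting slots. For `k = ℓ` the surviving `π` are the
`(N-k)! k!` permutations preserving both groups of slots; by Fubini and the symmetry of the ket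
each contributes `‖u₀‖^{2(N-k)} ⟨ψ_k, φ_k⟩`, which cancels the normalisation. Parseval is then
Pythagoras for this orthogonal family.
-/

open Function Finset
open scoped ComplexConjugate

namespace MeasureTheory

section L2

variable {α β : Type*} [MeasurableSpace α] [MeasurableSpace β] {μ : Measure α} {ν : Measure β}

theorem MemLp.integrable_conj_mul {f g : α → ℂ} (hf : MemLp f 2 μ) (hg : MemLp g 2 μ) :
    Integrable (fun x => conj (f x) * g x) μ :=
  hf.star.integrable_mul hg

theorem integral_conj_mul_self (f : α → ℂ) :
    ∫ x, conj (f x) * f x ∂μ = ((∫ x, ‖f x‖ ^ 2 ∂μ : ℝ) : ℂ) := by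
  simp_rw [Complex.conj_mul', ← Complex.ofReal_pow]
  exact integral_ofReal

theorem MemLp.two_mul_prod [SigmaFinite μ] [SigmaFinite ν] {f : α → ℂ} {g : β → ℂ}
    (hf : MemLp f 2 μ) (hg : MemLp g 2 ν) :
    MemLp (fun z : α × β => f z.1 * g z.2) 2 (μ.prod ν) := by
  have hm : AEStronglyMeasurable (fun z : α × β => f z.1 * g z.2) (μ.prod ν) :=
    hf.1.comp_fst.mul hg.1.comp_snd
  rw [memLp_two_iff_integrable_sq_norm hm]
  simpa only [norm_mul, mul_pow] using
    ((memLp_two_iff_integrable_sq_norm hf.1).1 hf).mul_prod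
      ((memLp_two_iff_integrable_sq_norm hg.1).1 hg)

theorem integral_norm_sum_sq_of_pairwise_orthogonal {ι : Type*} [Fintype ι] {T : ι → α → ℂ}
    (hT : ∀ i, MemLp (T i) 2 μ) (horth : Pairwise fun i j => ∫ x, conj (T i x) * T j x ∂μ = 0) :
    ∫ x, ‖∑ i, T i x‖ ^ 2 ∂μ = ∑ i, ∫ x, ‖T i x‖ ^ 2 ∂μ := by
  apply Complex.ofReal_injective
  simp_rw [Complex.ofReal_sum, ← integral_conj_mul_self, map_sum, sum_mul_sum]
  rw [integral_finsetSum _ fun i _ => integrable_finsetSum _ fun j _ =>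
    (hT i).integrable_conj_mul (hT j)]
  refine sum_congr rfl fun i _ => ?_
  rw [integral_finsetSum _ fun j _ => (hT i).integrable_conj_mul (hT j),
    sum_eq_single i (fun j _ hji => horth hji.symm) (by simp)]

end L2

variable {Ω : Type*} [MeasureSpace Ω] [SigmaFinite (volume : Measure Ω)]

theorem MemLp.two_fintype_prod {ι : Type*} [Fintype ι] {f : Ω → ℂ} (hf : MemLp f 2) :
    MemLp (fun x : ι → Ω => ∏ i, f (x i)) 2 := by
  have hm : AEStronglyMeasurable (fun x : ι → Ω => ∏ i, f (x i)) volume :=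
    Finset.aestronglyMeasurable_fun_prod _ fun i _ =>
      hf.1.comp_quasiMeasurePreserving (Measure.quasiMeasurePreserving_eval _ i)
  rw [memLp_two_iff_integrable_sq_norm hm]
  simpa only [norm_prod, Finset.prod_pow, volume_pi] using
    Integrable.fintype_prod (f := fun _ : ι => fun y => ‖f y‖ ^ 2)
      fun _ => (memLp_two_iff_integrable_sq_norm hf.1).1 hf

end MeasureTheory

section Split

variable {Ω κ ι ι' : Type*}

def sumSplit (Ω : Type*) [MeasurableSpace Ω] (e : ι ⊕ ι' ≃ κ) :
    (κ → Ω) ≃ᵐ (ι → Ω) × (ι' → Ω) :=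
  (MeasurableEquiv.piCongrLeft (fun _ => Ω) e).symm.trans
    (MeasurableEquiv.sumPiEquivProdPi fun _ => Ω)

@[simp]
theorem sumSplit_apply [MeasurableSpace Ω] (e : ι ⊕ ι' ≃ κ) (x : κ → Ω) :
    sumSplit Ω e x = (fun i => x (e (.inl i)), fun j => x (e (.inr j))) :=
  rfl

theorem sumSplit_symm_apply [MeasurableSpace Ω] (e : ι ⊕ ι' ≃ κ) (p : ι → Ω) (q : ι' → Ω) :
    (sumSplit Ω e).symm (p, q) = fun s => Sum.elim p q (e.symm s) := by
  rw [MeasurableEquiv.symm_apply_eq, sumSplit_apply]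
  simp

variable [MeasureSpace Ω] [SigmaFinite (volume : Measure Ω)] [Fintype κ]

theorem measurePreserving_sumSplit [Fintype ι] [Fintype ι'] (e : ι ⊕ ι' ≃ κ) :
    MeasurePreserving (sumSplit Ω e) volume volume :=
  (volume_measurePreserving_piCongrLeft (fun _ => Ω) e).symm _ |>.trans
    (volume_measurePreserving_sumPiEquivProdPi fun _ => Ω)

theorem integral_prod_inl_mul_inr [Fintype ι] [Fintype ι'] (e : ι ⊕ ι' ≃ κ) (f : Ω → ℂ)
    (g : (ι' → Ω) → ℂ) :
    ∫ x : κ → Ω, (∏ i, f (x (e (.inl i)))) * g (fun j => x (e (.inr j)))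
      = (∫ y, f y) ^ Fintype.card ι * ∫ v, g v := by
  rw [← integral_fintype_prod_eq_pow, ← integral_prod_mul (fun p : ι → Ω => ∏ i, f (p i)) g,
    ← volume_pi, ← Measure.volume_eq_prod, ← (measurePreserving_sumSplit e).integral_comp']
  simp

theorem measurePreserving_comp_perm (π : Equiv.Perm κ) :
    MeasurePreserving (fun x : κ → Ω => x ∘ π) volume volume :=
  (volume_measurePreserving_piCongrLeft (fun _ => Ω) π).symm _

theorem integral_comp_perm (π : Equiv.Perm κ) (g : (κ → Ω) → ℂ) :
    ∫ x, g (x ∘ π) = ∫ x, g x :=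
  (volume_measurePreserving_piCongrLeft (fun _ => Ω) π).symm.integral_comp' g

theorem integral_eq_zero_of_integral_update_eq_zero [DecidableEq κ] {F : (κ → Ω) → ℂ}
    (hF : Integrable F) (j : κ) (h : ∀ x, ∫ y, F (update x j y) = 0) : ∫ x, F x = 0 := by
  set e := sumSplit Ω (Equiv.sumCompl (· = j))
  have hmp := measurePreserving_sumSplit (Ω := Ω) (Equiv.sumCompl (· = j))
  have hFe : Integrable (fun z => F (e.symm z)) (volume.prod volume) := by
    rw [← Measure.volume_eq_prod]
    exact (hmp.symm.integrable_comp_emb e.symm.measurableEmbedding).2 hF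
  rw [← hmp.symm.integral_comp', Measure.volume_eq_prod, integral_prod_symm _ hFe]
  refine integral_eq_zero_of_ae (.of_forall fun q => ?_)
  show ∫ p, F (e.symm (p, q)) = 0
  rcases isEmpty_or_nonempty Ω with hΩ | ⟨⟨y₀⟩⟩
  · exact integral_of_isEmpty
  have hglue : ∀ y, e.symm (fun _ => y, q) = update (e.symm (fun _ => y₀, q)) j y := by
    intro y
    funext s
    by_cases hs : s = j
    · subst hs; simp [e, sumSplit_symm_apply]
    · simp [e, sumSplit_symm_apply, hs]
  rw [← (volume_preserving_piUnique fun _ : {a // a = j} => Ω).symm.integral_comp']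
  exact (integral_congr_ae (.of_forall fun y => congrArg F (hglue y))).trans (h _)

end Split

section PermInner

variable {Ω : Type*} [MeasureSpace Ω] [SigmaFinite (volume : Measure Ω)]
variable {κ : Type*} [Fintype κ]

noncomputable def permInner (F G : (κ → Ω) → ℂ) (π : Equiv.Perm κ) : ℂ :=
  ∫ x, conj (F x) * G (x ∘ π)

theorem permInner_eq_conj (F G : (κ → Ω) → ℂ) (π : Equiv.Perm κ) :
    permInner F G π = conj (permInner G F π⁻¹) := by
  rw [permInner, permInner, ← integral_conj, ← integral_comp_perm π⁻¹]
  refine integral_congr_ae (.of_forall fun x => ?_)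
  simp only [map_mul, Complex.conj_conj, comp_assoc, Equiv.Perm.inv_def, Equiv.symm_comp_self,
    comp_id]
  ring

theorem integral_conj_sum_comp_perm_mul_sum_comp_perm [DecidableEq κ] {F G : (κ → Ω) → ℂ}
    (hF : MemLp F 2) (hG : MemLp G 2) :
    ∫ x, conj (∑ σ : Equiv.Perm κ, F (x ∘ σ)) * ∑ τ : Equiv.Perm κ, G (x ∘ τ)
      = Fintype.card (Equiv.Perm κ) * ∑ π, permInner F G π := by
  have hcomp : ∀ {H : (κ → Ω) → ℂ}, MemLp H 2 → ∀ σ : Equiv.Perm κ,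
      MemLp (fun x => H (x ∘ σ)) 2 :=
    fun hH σ => hH.comp_measurePreserving (measurePreserving_comp_perm σ)
  have hterm : ∀ σ τ : Equiv.Perm κ,
      ∫ x, conj (F (x ∘ σ)) * G (x ∘ τ) = permInner F G (σ⁻¹ * τ) := by
    intro σ τ
    rw [permInner, ← integral_comp_perm σ (fun x => conj (F x) * G (x ∘ (σ⁻¹ * τ)))]
    simp [comp_def]
  simp_rw [map_sum, Finset.sum_mul_sum]
  rw [integral_finsetSum _ fun σ _ => integrable_finsetSum _ fun τ _ =>
    (hcomp hF σ).integrable_conj_mul (hcomp hG τ)]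
  simp_rw [integral_finsetSum _ fun τ _ => (hcomp hF _).integrable_conj_mul (hcomp hG τ), hterm]
  have hreindex : ∀ σ : Equiv.Perm κ, ∑ τ, permInner F G (σ⁻¹ * τ) = ∑ π, permInner F G π :=
    fun σ => Fintype.sum_equiv (Equiv.mulLeft σ⁻¹) _ _ fun _ => rfl
  rw [Finset.sum_congr rfl fun σ _ => hreindex σ, Finset.sum_const, Finset.card_univ,
    nsmul_eq_mul]

end PermInner

section BlockTensor

variable {Ω κ ι ι' : Type*} [Fintype ι]

def blockTensor (e : ι ⊕ ι' ≃ κ) (u₀ : Ω → ℂ) (χ : (ι' → Ω) → ℂ) (x : κ → Ω) : ℂ :=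
  (∏ i, u₀ (x (e (.inl i)))) * χ (fun j => x (e (.inr j)))

theorem blockTensor_update_inl [DecidableEq κ] [DecidableEq ι] (e : ι ⊕ ι' ≃ κ) (u₀ : Ω → ℂ)
    (χ : (ι' → Ω) → ℂ) (x : κ → Ω) (i₀ : ι) (y : Ω) :
    blockTensor e u₀ χ (update x (e (.inl i₀)) y)
      = u₀ y * ((∏ i ∈ univ.erase i₀, u₀ (x (e (.inl i)))) * χ (fun j => x (e (.inr j)))) := by
  have hprod : ∏ i ∈ univ.erase i₀, u₀ (update x (e (.inl i₀)) y (e (.inl i)))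
      = ∏ i ∈ univ.erase i₀, u₀ (x (e (.inl i))) :=
    prod_congr rfl fun i hi => by
      rw [update_of_ne (e.injective.ne (Sum.inl_injective.ne (ne_of_mem_erase hi)))]
  have hχ : (fun j => update x (e (.inl i₀)) y (e (.inr j))) = fun j => x (e (.inr j)) :=
    funext fun j => update_of_ne (e.injective.ne Sum.inr_ne_inl) _ _
  rw [blockTensor, ← mul_prod_erase _ _ (mem_univ i₀), hprod, hχ, update_self, mul_assoc]

theorem blockTensor_update_inr [DecidableEq κ] [DecidableEq ι'] (e : ι ⊕ ι' ≃ κ) (u₀ : Ω → ℂ)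
    (χ : (ι' → Ω) → ℂ) (x : κ → Ω) (t : ι') (y : Ω) :
    blockTensor e u₀ χ (update x (e (.inr t)) y)
      = (∏ i, u₀ (x (e (.inl i)))) * χ (update (fun j => x (e (.inr j))) t y) := by
  have hprod : ∏ i, u₀ (update x (e (.inr t)) y (e (.inl i))) = ∏ i, u₀ (x (e (.inl i))) :=
    prod_congr rfl fun i _ => by rw [update_of_ne (e.injective.ne Sum.inl_ne_inr)]
  have hχ : (fun j => update x (e (.inr t)) y (e (.inr j)))
      = update (fun j => x (e (.inr j))) t y :=
    update_comp_eq_of_injective x (e.injective.comp Sum.inr_injective) t y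
  rw [blockTensor, hprod, hχ]

theorem blockTensor_comp_permCongr_sumCongr (e : ι ⊕ ι' ≃ κ) (u₀ : Ω → ℂ) {χ : (ι' → Ω) → ℂ}
    (hχ : ∀ (σ : Equiv.Perm ι') v, χ (v ∘ σ) = χ v) (σ₁ : Equiv.Perm ι) (σ₂ : Equiv.Perm ι')
    (x : κ → Ω) :
    blockTensor e u₀ χ (x ∘ e.permCongr (σ₁.sumCongr σ₂)) = blockTensor e u₀ χ x := by
  simp only [blockTensor, comp_apply, Equiv.permCongr_apply, Equiv.symm_apply_apply,
    Equiv.sumCongr_apply, Sum.map_inl, Sum.map_inr]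
  rw [Equiv.prod_comp σ₁ fun i => u₀ (x (e (.inl i)))]
  exact congrArg _ (hχ σ₂ fun j => x (e (.inr j)))

variable [MeasureSpace Ω] [SigmaFinite (volume : Measure Ω)] [Fintype κ] [Fintype ι']

theorem memLp_blockTensor (e : ι ⊕ ι' ≃ κ) {u₀ : Ω → ℂ} {χ : (ι' → Ω) → ℂ} (hu₀ : MemLp u₀ 2)
    (hχ : MemLp χ 2) : MemLp (blockTensor e u₀ χ) 2 := by
  have h : MemLp (fun p : (ι → Ω) × (ι' → Ω) => (∏ i, u₀ (p.1 i)) * χ p.2) 2 :=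
    Measure.volume_eq_prod (ι → Ω) (ι' → Ω) ▸ hu₀.two_fintype_prod.two_mul_prod hχ
  have hcomp : (fun p : (ι → Ω) × (ι' → Ω) => (∏ i, u₀ (p.1 i)) * χ p.2) ∘ sumSplit Ω e
      = blockTensor e u₀ χ :=
    funext fun x => by rw [comp_apply, sumSplit_apply]; rfl
  exact hcomp ▸ h.comp_measurePreserving (measurePreserving_sumSplit e)

theorem permInner_blockTensor_permCongr_sumCongr (e : ι ⊕ ι' ≃ κ) (u₀ : Ω → ℂ)
    (χa : (ι' → Ω) → ℂ) {χb : (ι' → Ω) → ℂ}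
    (hχb_sym : ∀ (σ : Equiv.Perm ι') v, χb (v ∘ σ) = χb v) (σ₁ : Equiv.Perm ι)
    (σ₂ : Equiv.Perm ι') :
    permInner (blockTensor e u₀ χa) (blockTensor e u₀ χb) (e.permCongr (σ₁.sumCongr σ₂))
      = (∫ y, conj (u₀ y) * u₀ y) ^ Fintype.card ι * ∫ v, conj (χa v) * χb v := by
  simp_rw [permInner, blockTensor_comp_permCongr_sumCongr e u₀ hχb_sym]
  rw [← integral_prod_inl_mul_inr e]
  refine integral_congr_ae (.of_forall fun x => ?_)
  simp only [blockTensor, map_mul, map_prod, prod_mul_distrib]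
  ring

end BlockTensor

section SlotCombinatorics

variable {κ ι ι' ι₁ ι₁' ι₂ ι₂' : Type*}

theorem card_le_of_forall_apply_inl_ne_inr [Fintype ι₁] [Fintype ι₂] (ea : ι₁ ⊕ ι₁' ≃ κ)
    (eb : ι₂ ⊕ ι₂' ≃ κ) (π : Equiv.Perm κ) (h : ∀ i t, π (eb (.inl i)) ≠ ea (.inr t)) :
    Fintype.card ι₂ ≤ Fintype.card ι₁ := by
  have hinl : ∀ i, ∃ i', π (eb (.inl i)) = ea (.inl i') := fun i => by
    rcases hs : ea.symm (π (eb (.inl i))) with i' | t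
    · exact ⟨i', by rw [← hs, Equiv.apply_symm_apply]⟩
    · exact absurd (by rw [← hs, Equiv.apply_symm_apply]) (h i t)
  choose f hf using hinl
  exact Fintype.card_le_of_injective f fun i j hij =>
    Sum.inl_injective (eb.injective (π.injective (by rw [hf, hf, hij])))

theorem exists_apply_inl_eq_inr_of_forall_ne_permCongr [Finite ι] [Finite ι']
    (e : ι ⊕ ι' ≃ κ) (π : Equiv.Perm κ)
    (h : ∀ (σ₁ : Equiv.Perm ι) (σ₂ : Equiv.Perm ι'), π ≠ e.permCongr (σ₁.sumCongr σ₂)) :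
    ∃ i t, π (e (.inl i)) = e (.inr t) := by
  by_contra! hno
  obtain ⟨⟨σ₁, σ₂⟩, hσ⟩ :=
    Equiv.Perm.mem_sumCongrHom_range_of_perm_mapsTo_inl (σ := e.symm.permCongr π) <| by
      rintro _ ⟨i, rfl⟩
      rcases hs : e.symm (π (e (.inl i))) with i' | t
      · exact ⟨i', by simp [hs]⟩
      · exact absurd (by rw [← hs, Equiv.apply_symm_apply]) (hno i t)
  rw [Equiv.Perm.sumCongrHom_apply] at hσ
  exact h σ₁ σ₂ (by rw [hσ]; ext; simp)

end SlotCombinatorics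

section Orthogonality

variable {Ω : Type*} [MeasureSpace Ω] [SigmaFinite (volume : Measure Ω)]
variable {κ ι ι' ι₁ ι₁' ι₂ ι₂' : Type*} [Fintype κ] [DecidableEq κ]

def OrthogonalInEachSlot [DecidableEq ι'] (u₀ : Ω → ℂ) (χ : (ι' → Ω) → ℂ) : Prop :=
  ∀ (j : ι') (v : ι' → Ω), ∫ y, conj (u₀ y) * χ (update v j y) = 0

variable [Fintype ι₁] [Fintype ι₁'] [DecidableEq ι₁'] [Fintype ι₂] [DecidableEq ι₂] [Fintype ι₂']

theorem permInner_blockTensor_eq_zero_of_apply_inl_eq_inr (ea : ι₁ ⊕ ι₁' ≃ κ)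
    (eb : ι₂ ⊕ ι₂' ≃ κ) {u₀ : Ω → ℂ} {χa : (ι₁' → Ω) → ℂ} {χb : (ι₂' → Ω) → ℂ}
    (hu₀ : MemLp u₀ 2) (hχa : MemLp χa 2) (hχb : MemLp χb 2)
    (hχa_orth : OrthogonalInEachSlot u₀ χa) {π : Equiv.Perm κ} {i₀ : ι₂} {t : ι₁'}
    (h : π (eb (.inl i₀)) = ea (.inr t)) :
    permInner (blockTensor ea u₀ χa) (blockTensor eb u₀ χb) π = 0 := by
  refine integral_eq_zero_of_integral_update_eq_zero
    ((memLp_blockTensor ea hu₀ hχa).integrable_conj_mul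
      ((memLp_blockTensor eb hu₀ hχb).comp_measurePreserving (measurePreserving_comp_perm π)))
    (ea (.inr t)) fun x => ?_
  have hupd : ∀ y, update x (ea (.inr t)) y ∘ π = update (x ∘ π) (eb (.inl i₀)) y := fun y => by
    rw [update_comp_equiv, ← h, Equiv.symm_apply_apply]
  set v := fun j => x (ea (.inr j))
  set A := ∏ i, u₀ (x (ea (.inl i)))
  set B := (∏ i ∈ univ.erase i₀, u₀ ((x ∘ π) (eb (.inl i))))
    * χb (fun j => (x ∘ π) (eb (.inr j)))
  have hslice : ∀ y, conj (blockTensor ea u₀ χa (update x (ea (.inr t)) y))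
        * blockTensor eb u₀ χb (update x (ea (.inr t)) y ∘ π)
      = conj A * B * conj (conj (u₀ y) * χa (update v t y)) := fun y => by
    rw [hupd, blockTensor_update_inl, blockTensor_update_inr, map_mul, map_mul, Complex.conj_conj]
    ring
  simp_rw [hslice]
  rw [integral_const_mul, integral_conj, hχa_orth, map_zero, mul_zero]

theorem permInner_blockTensor_eq_zero_of_card_ne [DecidableEq ι₁] [DecidableEq ι₂']
    (ea : ι₁ ⊕ ι₁' ≃ κ) (eb : ι₂ ⊕ ι₂' ≃ κ) {u₀ : Ω → ℂ} {χa : (ι₁' → Ω) → ℂ}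
    {χb : (ι₂' → Ω) → ℂ} (hu₀ : MemLp u₀ 2) (hχa : MemLp χa 2) (hχb : MemLp χb 2)
    (hχa_orth : OrthogonalInEachSlot u₀ χa) (hχb_orth : OrthogonalInEachSlot u₀ χb)
    (hcard : Fintype.card ι₁ ≠ Fintype.card ι₂) (π : Equiv.Perm κ) :
    permInner (blockTensor ea u₀ χa) (blockTensor eb u₀ χb) π = 0 := by
  by_cases hA : ∃ i t, π (eb (.inl i)) = ea (.inr t)
  · obtain ⟨i, t, h⟩ := hA
    exact permInner_blockTensor_eq_zero_of_apply_inl_eq_inr ea eb hu₀ hχa hχb hχa_orth h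
  -- an excitation slot of the ket on a `u₀`-slot of the bra: exchange bra and ket
  by_cases hB : ∃ i t, π⁻¹ (ea (.inl i)) = eb (.inr t)
  · obtain ⟨i, t, h⟩ := hB
    rw [permInner_eq_conj,
      permInner_blockTensor_eq_zero_of_apply_inl_eq_inr eb ea hu₀ hχb hχa hχb_orth h, map_zero]
  push Not at hA hB
  exact (hcard (le_antisymm (card_le_of_forall_apply_inl_ne_inr eb ea π⁻¹ hB)
    (card_le_of_forall_apply_inl_ne_inr ea eb π hA))).elim

variable [Fintype ι] [DecidableEq ι] [Fintype ι'] [DecidableEq ι']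

theorem sum_permInner_blockTensor_self (e : ι ⊕ ι' ≃ κ) {u₀ : Ω → ℂ} {χa χb : (ι' → Ω) → ℂ}
    (hu₀ : MemLp u₀ 2) (hχa : MemLp χa 2) (hχb : MemLp χb 2)
    (hχa_orth : OrthogonalInEachSlot u₀ χa)
    (hχb_sym : ∀ (σ : Equiv.Perm ι') v, χb (v ∘ σ) = χb v) :
    ∑ π, permInner (blockTensor e u₀ χa) (blockTensor e u₀ χb) π
      = ((Fintype.card ι).factorial * (Fintype.card ι').factorial : ℕ)
        * ((∫ y, conj (u₀ y) * u₀ y) ^ Fintype.card ι * ∫ v, conj (χa v) * χb v) := by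
  let φ : Equiv.Perm ι × Equiv.Perm ι' ↪ Equiv.Perm κ :=
    ⟨fun σ => e.permCongr (σ.1.sumCongr σ.2),
      e.permCongr.injective.comp Equiv.Perm.sumCongrHom_injective⟩
  rw [← sum_subset (subset_univ (univ.map φ)) fun π _ hπ => ?_, sum_map]
  · simp only [φ, Function.Embedding.coeFn_mk,
      permInner_blockTensor_permCongr_sumCongr e u₀ χa hχb_sym, sum_const, card_univ,
      Fintype.card_prod, Fintype.card_perm, nsmul_eq_mul]
  · have hne : ∀ (σ₁ : Equiv.Perm ι) (σ₂ : Equiv.Perm ι'), π ≠ e.permCongr (σ₁.sumCongr σ₂) :=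
      fun σ₁ σ₂ hπσ => hπ (mem_map.2 ⟨(σ₁, σ₂), mem_univ _, hπσ.symm⟩)
    obtain ⟨i, t, h⟩ := exists_apply_inl_eq_inr_of_forall_ne_permCongr e π hne
    exact permInner_blockTensor_eq_zero_of_apply_inl_eq_inr e e hu₀ hχa hχb hχa_orth h

end Orthogonality

section SymTensor

variable {Ω : Type*}

def finSplit (N a : ℕ) (h : a ≤ N) : Fin (N - a) ⊕ Fin a ≃ Fin N :=
  finSumFinEquiv.trans (finCongr (Nat.sub_add_cancel h))

theorem symTensor_eq_sum_blockTensor (u₀ : Ω → ℂ) {N a : ℕ} (h : a ≤ N) (χ : (Fin a → Ω) → ℂ) :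
    symTensor u₀ N a h χ = fun x =>
      ((√(((N - a).factorial * a.factorial * N.factorial : ℕ) : ℝ))⁻¹ : ℝ)
        * ∑ σ : Equiv.Perm (Fin N), blockTensor (finSplit N a h) u₀ χ (x ∘ σ) :=
  rfl

variable [MeasureSpace Ω] [SigmaFinite (volume : Measure Ω)]

theorem memLp_symTensor {N a : ℕ} (h : a ≤ N) {u₀ : Ω → ℂ} {χ : (Fin a → Ω) → ℂ}
    (hu₀ : MemLp u₀ 2) (hχ : MemLp χ 2) : MemLp (symTensor u₀ N a h χ) 2 := by
  rw [symTensor_eq_sum_blockTensor]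
  exact (memLp_finsetSum _ fun σ _ => (memLp_blockTensor _ hu₀ hχ).comp_measurePreserving
    (measurePreserving_comp_perm σ)).const_mul _

theorem ofReal_inv_sqrt_mul_self_mul_natCast {n : ℕ} (hn : n ≠ 0) :
    (((√(n : ℝ))⁻¹ : ℝ) : ℂ) * (((√(n : ℝ))⁻¹ : ℝ) : ℂ) * n = 1 := by
  rw [← Complex.ofReal_mul, ← mul_inv, Real.mul_self_sqrt n.cast_nonneg, Complex.ofReal_inv,
    Complex.ofReal_natCast, inv_mul_cancel₀ (Nat.cast_ne_zero.2 hn)]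

theorem integral_conj_symTensor_mul_symTensor {N a b : ℕ} (ha : a ≤ N) (hb : b ≤ N)
    {u₀ : Ω → ℂ} {χa : (Fin a → Ω) → ℂ} {χb : (Fin b → Ω) → ℂ}
    (hu₀ : MemLp u₀ 2) (hχa : MemLp χa 2) (hχb : MemLp χb 2) :
    ∫ x, conj (symTensor u₀ N a ha χa x) * symTensor u₀ N b hb χb x
      = ((√(((N - a).factorial * a.factorial * N.factorial : ℕ) : ℝ))⁻¹ : ℝ)
        * ((√(((N - b).factorial * b.factorial * N.factorial : ℕ) : ℝ))⁻¹ : ℝ)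
        * (N.factorial * ∑ π, permInner (blockTensor (finSplit N a ha) u₀ χa)
            (blockTensor (finSplit N b hb) u₀ χb) π) := by
  simp_rw [symTensor_eq_sum_blockTensor, map_mul, Complex.conj_ofReal, mul_mul_mul_comm]
  rw [integral_const_mul, integral_conj_sum_comp_perm_mul_sum_comp_perm
    (memLp_blockTensor _ hu₀ hχa) (memLp_blockTensor _ hu₀ hχb), Fintype.card_perm,
    Fintype.card_fin]
  ring

theorem integral_conj_symTensor_mul_symTensor_of_ne {N a b : ℕ} (ha : a ≤ N) (hb : b ≤ N)
    {u₀ : Ω → ℂ} {χa : (Fin a → Ω) → ℂ} {χb : (Fin b → Ω) → ℂ}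
    (hu₀ : MemLp u₀ 2) (hχa : MemLp χa 2) (hχb : MemLp χb 2)
    (hχa_orth : OrthogonalInEachSlot u₀ χa) (hχb_orth : OrthogonalInEachSlot u₀ χb)
    (hab : a ≠ b) :
    ∫ x, conj (symTensor u₀ N a ha χa x) * symTensor u₀ N b hb χb x = 0 := by
  have hcard : Fintype.card (Fin (N - a)) ≠ Fintype.card (Fin (N - b)) := by
    simp only [Fintype.card_fin]; omega
  rw [integral_conj_symTensor_mul_symTensor ha hb hu₀ hχa hχb,
    sum_eq_zero fun π _ => permInner_blockTensor_eq_zero_of_card_ne _ _ hu₀ hχa hχb hχa_orth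
      hχb_orth hcard π, mul_zero, mul_zero]

theorem integral_conj_symTensor_mul_symTensor_self {N k : ℕ} (hk : k ≤ N) {u₀ : Ω → ℂ}
    {χa χb : (Fin k → Ω) → ℂ} (hu₀ : MemLp u₀ 2) (hu₀norm : ∫ y, ‖u₀ y‖ ^ 2 = 1)
    (hχa : MemLp χa 2) (hχb : MemLp χb 2) (hχa_orth : OrthogonalInEachSlot u₀ χa)
    (hχb_sym : ∀ (σ : Equiv.Perm (Fin k)) v, χb (v ∘ σ) = χb v) :
    ∫ x, conj (symTensor u₀ N k hk χa x) * symTensor u₀ N k hk χb x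
      = ∫ v, conj (χa v) * χb v := by
  have hn : (N - k).factorial * k.factorial * N.factorial ≠ 0 := by positivity
  rw [integral_conj_symTensor_mul_symTensor hk hk hu₀ hχa hχb,
    sum_permInner_blockTensor_self _ hu₀ hχa hχb hχa_orth hχb_sym, integral_conj_mul_self,
    hu₀norm, Complex.ofReal_one, one_pow, one_mul, Fintype.card_fin, Fintype.card_fin]
  calc _ = ((((√(((N - k).factorial * k.factorial * N.factorial : ℕ) : ℝ))⁻¹ : ℝ) : ℂ)
          * (((√(((N - k).factorial * k.factorial * N.factorial : ℕ) : ℝ))⁻¹ : ℝ) : ℂ)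
          * (((N - k).factorial * k.factorial * N.factorial : ℕ) : ℂ))
        * ∫ v, conj (χa v) * χb v := by push_cast; ring
    _ = _ := by rw [ofReal_inv_sqrt_mul_self_mul_natCast hn, one_mul]

end SymTensor

theorem stmt19_general {Ω : Type*} [MeasureSpace Ω] [SigmaFinite (volume : Measure Ω)]
    (N : ℕ) (u₀ : Ω → ℂ) (hu₀ : MemLp u₀ 2) (hu₀norm : (∫ x, ‖u₀ x‖^2) = 1)
    -- a pair of excitation vectors of orders k and ℓ
    (k ℓ : ℕ) (hk : k ≤ N) (hℓ : ℓ ≤ N)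
    (ψk φk : (Fin k → Ω) → ℂ) (ψℓ : (Fin ℓ → Ω) → ℂ)
    (hψk2 : MemLp ψk 2) (hφk2 : MemLp φk 2) (hψℓ2 : MemLp ψℓ 2)
    (hφksym : ∀ (σ : Equiv.Perm (Fin k)) v, φk (v ∘ σ) = φk v)
    (hψkorth : ∀ (i : Fin k) (v : Fin k → Ω),
      (∫ y, (starRingEnd ℂ) (u₀ y) * ψk (Function.update v i y)) = 0)
    (hψℓorth : ∀ (i : Fin ℓ) (v : Fin ℓ → Ω),
      (∫ y, (starRingEnd ℂ) (u₀ y) * ψℓ (Function.update v i y)) = 0)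
    -- a full family of excitation vectors ψ_0, …, ψ_N
    (ψ : (m : Fin (N + 1)) → (Fin m.1 → Ω) → ℂ)
    (hψ2 : ∀ m, MemLp (ψ m) 2)
    (hψsym : ∀ m (σ : Equiv.Perm (Fin m.1)) v, ψ m (v ∘ σ) = ψ m v)
    (hψorth : ∀ m (i : Fin m.1) (v : Fin m.1 → Ω),
      (∫ y, (starRingEnd ℂ) (u₀ y) * ψ m (Function.update v i y)) = 0) :
    -- orthogonality of the blocks for k ≠ ℓ
    (k ≠ ℓ → (∫ x : Fin N → Ω,
        (starRingEnd ℂ) (symTensor u₀ N k hk ψk x) * symTensor u₀ N ℓ hℓ ψℓ x) = 0) ∧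
    -- isometry on each block: ⟨u₀^{⊗(N-k)} ⊗_s ψ_k, u₀^{⊗(N-k)} ⊗_s φ_k⟩ = ⟨ψ_k, φ_k⟩
    ((∫ x : Fin N → Ω,
        (starRingEnd ℂ) (symTensor u₀ N k hk ψk x) * symTensor u₀ N k hk φk x)
      = ∫ v : Fin k → Ω, (starRingEnd ℂ) (ψk v) * φk v) ∧
    -- Parseval: ‖Σ_k u₀^{⊗(N-k)} ⊗_s ψ_k‖² = Σ_k ‖ψ_k‖²
    ((∫ x : Fin N → Ω, ‖∑ m : Fin (N + 1), symTensor u₀ N m m.is_le (ψ m) x‖^2)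
      = ∑ m : Fin (N + 1), ∫ v : Fin m.1 → Ω, ‖ψ m v‖^2) := by
  refine ⟨integral_conj_symTensor_mul_symTensor_of_ne hk hℓ hu₀ hψk2 hψℓ2 hψkorth hψℓorth,
    integral_conj_symTensor_mul_symTensor_self hk hu₀ hu₀norm hψk2 hφk2 hψkorth hφksym, ?_⟩
  rw [integral_norm_sum_sq_of_pairwise_orthogonal (fun m => memLp_symTensor _ hu₀ (hψ2 m))
    fun m m' hmm' => integral_conj_symTensor_mul_symTensor_of_ne _ _ hu₀ (hψ2 m) (hψ2 m')
      (hψorth m) (hψorth m') (Fin.val_injective.ne hmm')]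
  refine sum_congr rfl fun m _ => Complex.ofReal_injective ?_
  rw [← integral_conj_mul_self, ← integral_conj_mul_self]
  exact integral_conj_symTensor_mul_symTensor_self _ hu₀ hu₀norm (hψ2 m) (hψ2 m) (hψorth m)
    (hψsym m)

/-- The map `U_N : Ψ = Σ_k u₀^{⊗(N-k)} ⊗_s ψ_k ↦ ψ₀ ⊕ ⋯ ⊕ ψ_N` is a well-defined unitary
from `⊗_sym^N L²(Ω)` onto `⊕_{n=0}^N ⊗_sym^n 𝔥₊`: the blocks `u₀^{⊗(N-k)} ⊗_s ψ_k` are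
mutually orthogonal for different `k`, satisfy
`⟨u₀^{⊗(N-k)} ⊗_s ψ_k, u₀^{⊗(N-ℓ)} ⊗_s ψ_ℓ⟩ = δ_{kℓ} ⟨ψ_k, ψ_ℓ⟩`, and consequently
`‖Ψ‖² = Σ_{k=0}^N ‖ψ_k‖²`.  Here `u₀` is a unit vector of `L²(Ω)` and the `ψ_k` are
symmetric `L²` functions of `k` variables each of whose slots is orthogonal to `u₀`. -/
theorem stmt19 {Ω : Type*} [MeasureSpace Ω] [SigmaFinite (volume : Measure Ω)]
    (N : ℕ) (u₀ : Ω → ℂ) (hu₀ : MemLp u₀ 2) (hu₀norm : (∫ x, ‖u₀ x‖^2) = 1)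
    -- a pair of excitation vectors of orders k and ℓ
    (k ℓ : ℕ) (hk : k ≤ N) (hℓ : ℓ ≤ N)
    (ψk φk : (Fin k → Ω) → ℂ) (ψℓ : (Fin ℓ → Ω) → ℂ)
    (hψk2 : MemLp ψk 2) (hφk2 : MemLp φk 2) (hψℓ2 : MemLp ψℓ 2)
    (hψksym : ∀ (σ : Equiv.Perm (Fin k)) v, ψk (v ∘ σ) = ψk v)
    (hφksym : ∀ (σ : Equiv.Perm (Fin k)) v, φk (v ∘ σ) = φk v)
    (hψℓsym : ∀ (σ : Equiv.Perm (Fin ℓ)) v, ψℓ (v ∘ σ) = ψℓ v)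
    (hψkorth : ∀ (i : Fin k) (v : Fin k → Ω),
      (∫ y, (starRingEnd ℂ) (u₀ y) * ψk (Function.update v i y)) = 0)
    (hφkorth : ∀ (i : Fin k) (v : Fin k → Ω),
      (∫ y, (starRingEnd ℂ) (u₀ y) * φk (Function.update v i y)) = 0)
    (hψℓorth : ∀ (i : Fin ℓ) (v : Fin ℓ → Ω),
      (∫ y, (starRingEnd ℂ) (u₀ y) * ψℓ (Function.update v i y)) = 0)
    -- a full family of excitation vectors ψ_0, …, ψ_N
    (ψ : (m : Fin (N + 1)) → (Fin m.1 → Ω) → ℂ)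
    (hψ2 : ∀ m, MemLp (ψ m) 2)
    (hψsym : ∀ m (σ : Equiv.Perm (Fin m.1)) v, ψ m (v ∘ σ) = ψ m v)
    (hψorth : ∀ m (i : Fin m.1) (v : Fin m.1 → Ω),
      (∫ y, (starRingEnd ℂ) (u₀ y) * ψ m (Function.update v i y)) = 0) :
    -- orthogonality of the blocks for k ≠ ℓ
    (k ≠ ℓ → (∫ x : Fin N → Ω,
        (starRingEnd ℂ) (symTensor u₀ N k hk ψk x) * symTensor u₀ N ℓ hℓ ψℓ x) = 0) ∧
    -- isometry on each block: ⟨u₀^{⊗(N-k)} ⊗_s ψ_k, u₀^{⊗(N-k)} ⊗_s φ_k⟩ = ⟨ψ_k, φ_k⟩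
    ((∫ x : Fin N → Ω,
        (starRingEnd ℂ) (symTensor u₀ N k hk ψk x) * symTensor u₀ N k hk φk x)
      = ∫ v : Fin k → Ω, (starRingEnd ℂ) (ψk v) * φk v) ∧
    -- Parseval: ‖Σ_k u₀^{⊗(N-k)} ⊗_s ψ_k‖² = Σ_k ‖ψ_k‖²
    ((∫ x : Fin N → Ω, ‖∑ m : Fin (N + 1), symTensor u₀ N m m.is_le (ψ m) x‖^2)
      = ∑ m : Fin (N + 1), ∫ v : Fin m.1 → Ω, ‖ψ m v‖^2) :=
  stmt19_general N u₀ hu₀ hu₀norm k ℓ hk hℓ ψk φk ψℓ hψk2 hφk2 hψℓ2 hφksym hψkorth hψℓorth ψ hψ2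
    hψsym hψorth
end
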